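/- arXiv:2007.08130 — 9 statements merged into one kernel-verified Lean document; each statement's English description precedes it below -/
import Mathlib

section
/- Let A = T^(α,m) - H^(α,m) and B = T^(β,m) - H^(β,m) be the n×n Toeplitz-minus-Hankel matrices defined below, with B invertible. Then the generalized eigenvalue problem A x = λ B x has eigenpairs λ_j = (α_0 + 2∑_{l=1}^m α_l cos(l j π h)) / (β_0 + 2∑_{l=1}^m β_l cos(l j π h)) with eigenvector entries x_{j,k} = sin(jπkh), where h = 1/(n+1), for j = 1,…,n, provided each denominator is nonzero. -/
open Real Matrix Finset

private def Tf (m : ℕ) (ξ : ℕ → ℂ) (i k : ℕ) : ℂ :=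
  if max i k - min i k ≤ m then ξ (max i k - min i k) else 0

private def Hf (n m : ℕ) (ξ : ℕ → ℂ) (i k : ℕ) : ℂ :=
  if i + k + 2 ≤ m then ξ (i + k + 2)
  else if 2 * n - (i + k) ≤ m then ξ (2 * n - (i + k)) else 0

private lemma ite_trunc (f : ℕ → ℂ) (a b : ℕ) :
    (∑ l ∈ Icc 1 a, if l ≤ b then f l else 0)
      = ∑ l ∈ Icc 1 b, if l ≤ a then f l else 0 := by
  rw [← Finset.sum_filter, ← Finset.sum_filter]
  congr 1
  ext l
  simp only [Finset.mem_filter, Finset.mem_Icc]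
  omega

private lemma row_sum (n m : ℕ) (hn : 2 ≤ n) (hm1 : 1 ≤ m) (hm2 : m ≤ n - 1)
    (ξ : ℕ → ℂ) (S : ℤ → ℂ) (c : ℕ → ℂ)
    (hSneg : ∀ p : ℤ, S (-p) = - S p)
    (hSrefl : ∀ p : ℤ, S (2*((n : ℤ)+1) - p) = - S p)
    (hSc : ∀ (a : ℤ) (l : ℕ), S (a + l) + S (a - l) = 2 * c l * S a)
    (i : Fin n) :
    ∑ k : Fin n, (Tf m ξ i.1 k.1 - Hf n m ξ i.1 k.1) * S (k.1 + 1)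
      = (ξ 0 + 2 * ∑ l ∈ Icc 1 m, ξ l * c l) * S (i.1 + 1) := by
  have hS0 : S 0 = 0 := by
    have h := hSneg 0
    rw [neg_zero] at h
    linear_combination h / 2
  have hSn1 : S ((n : ℤ) + 1) = 0 := by
    have h := hSrefl ((n : ℤ) + 1)
    have e : 2*((n : ℤ)+1) - ((n : ℤ)+1) = (n : ℤ) + 1 := by ring
    rw [e] at h
    linear_combination h / 2
  have hi : i.1 < n := i.2
  set i0 := i.1 with hi0
  -- convert to a sum over range n
  rw [Fin.sum_univ_eq_sum_range (fun k => (Tf m ξ i0 k - Hf n m ξ i0 k) * S (k + 1)) n]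
  have split1 : ∀ k, (Tf m ξ i0 k - Hf n m ξ i0 k) * S (k + 1)
      = Tf m ξ i0 k * S (k + 1) - Hf n m ξ i0 k * S (k + 1) := fun k => by ring
  rw [Finset.sum_congr rfl (fun k _ => split1 k), Finset.sum_sub_distrib]
  -- T part
  have hTsplit : ∑ k ∈ Finset.range n, Tf m ξ i0 k * S (k + 1)
      = (∑ k ∈ Finset.range i0, Tf m ξ i0 k * S (k + 1)) + ξ 0 * S ((i0 : ℤ) + 1)
        + ∑ k ∈ Finset.Ico (i0+1) n, Tf m ξ i0 k * S (k + 1) := by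
    rw [Finset.range_eq_Ico,
      ← Finset.sum_Ico_consecutive (fun k => Tf m ξ i0 k * S (k + 1)) (Nat.zero_le (i0+1)) hi,
      ← Finset.range_eq_Ico, Finset.sum_range_succ]
    have : Tf m ξ i0 i0 = ξ 0 := by simp [Tf, hm1]
    rw [this]
  have hTlow : ∑ k ∈ Finset.range i0, Tf m ξ i0 k * S (k + 1)
      = ∑ l ∈ Icc 1 m, (if l ≤ i0 then ξ l * S ((i0:ℤ)+1-l) else 0) := by
    rw [← ite_trunc (fun l => ξ l * S ((i0:ℤ)+1-l)) i0 m]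
    refine Finset.sum_nbij' (fun k => i0 - k) (fun l => i0 - l) ?_ ?_ ?_ ?_ ?_
    · intro k hk; simp only [Finset.mem_range] at hk; simp only [Finset.mem_Icc]; omega
    · intro l hl; simp only [Finset.mem_Icc] at hl; simp only [Finset.mem_range]; omega
    · intro k hk; simp only [Finset.mem_range] at hk; omega
    · intro l hl; simp only [Finset.mem_Icc] at hl; omega
    · intro k hk
      simp only [Finset.mem_range] at hk
      have h1 : max i0 k = i0 := by omega
      have h2 : min i0 k = k := by omega
      have h3 : ((i0:ℤ) + 1 - ((i0 - k : ℕ) : ℤ)) = (k : ℤ) + 1 := by omega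
      simp only [Tf, h1, h2, h3, ite_mul, zero_mul]
  have hTup : ∑ k ∈ Finset.Ico (i0+1) n, Tf m ξ i0 k * S (k + 1)
      = ∑ l ∈ Icc 1 m, (if l ≤ n - 1 - i0 then ξ l * S ((i0:ℤ)+1+l) else 0) := by
    rw [← ite_trunc (fun l => ξ l * S ((i0:ℤ)+1+l)) (n - 1 - i0) m]
    refine Finset.sum_nbij' (fun k => k - i0) (fun l => i0 + l) ?_ ?_ ?_ ?_ ?_
    · intro k hk; simp only [Finset.mem_Ico] at hk; simp only [Finset.mem_Icc]; omega
    · intro l hl; simp only [Finset.mem_Icc] at hl; simp only [Finset.mem_Ico]; omega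
    · intro k hk; simp only [Finset.mem_Ico] at hk; omega
    · intro l hl; simp only [Finset.mem_Icc] at hl; omega
    · intro k hk
      simp only [Finset.mem_Ico] at hk
      have h1 : max i0 k = k := by omega
      have h2 : min i0 k = i0 := by omega
      have h3 : ((i0:ℤ) + 1 + ((k - i0 : ℕ) : ℤ)) = (k : ℤ) + 1 := by omega
      simp only [Tf, h1, h2, h3, ite_mul, zero_mul]
  -- H part
  have hHpt : ∀ k, k < n → Hf n m ξ i0 k * S (k + 1)
      = (if i0 + k + 2 ≤ m then ξ (i0+k+2) * S (k + 1) else 0)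
        + (if 2*n - (i0+k) ≤ m then ξ (2*n - (i0+k)) * S (k + 1) else 0) := by
    intro k hk
    simp only [Hf, ite_mul, zero_mul]
    split_ifs with h1 h2
    · omega
    · ring
    · ring
    · ring
  have hHsum : ∑ k ∈ Finset.range n, Hf n m ξ i0 k * S (k + 1)
      = (∑ k ∈ Finset.range n, if i0 + k + 2 ≤ m then ξ (i0+k+2) * S (k + 1) else 0)
        + ∑ k ∈ Finset.range n, if 2*n - (i0+k) ≤ m then ξ (2*n - (i0+k)) * S (k + 1) else 0 := by
    rw [← Finset.sum_add_distrib]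
    exact Finset.sum_congr rfl (fun k hk => hHpt k (Finset.mem_range.mp hk))
  have hH1 : (∑ k ∈ Finset.range n, if i0 + k + 2 ≤ m then ξ (i0+k+2) * S (k + 1) else 0)
      = ∑ l ∈ Icc 1 m, (if i0 + 2 ≤ l then -(ξ l * S ((i0:ℤ)+1-l)) else 0) := by
    rw [← Finset.sum_filter, ← Finset.sum_filter]
    refine Finset.sum_nbij' (fun k => i0 + k + 2) (fun l => l - i0 - 2) ?_ ?_ ?_ ?_ ?_
    · intro k hk; simp only [Finset.mem_filter, Finset.mem_range] at hk
      simp only [Finset.mem_filter, Finset.mem_Icc]; omega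
    · intro l hl; simp only [Finset.mem_filter, Finset.mem_Icc] at hl
      simp only [Finset.mem_filter, Finset.mem_range]; omega
    · intro k hk; simp only [Finset.mem_filter, Finset.mem_range] at hk; omega
    · intro l hl; simp only [Finset.mem_filter, Finset.mem_Icc] at hl; omega
    · intro k hk
      simp only [Finset.mem_filter, Finset.mem_range] at hk
      have h3 : ((i0:ℤ) + 1 - ((i0 + k + 2 : ℕ) : ℤ)) = -((k : ℤ) + 1) := by omega
      rw [h3, hSneg]
      ring
  have hH2 : (∑ k ∈ Finset.range n, if 2*n - (i0+k) ≤ m then ξ (2*n - (i0+k)) * S (k + 1) else 0)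
      = ∑ l ∈ Icc 1 m, (if n + 1 ≤ i0 + l then -(ξ l * S ((i0:ℤ)+1+l)) else 0) := by
    rw [← Finset.sum_filter, ← Finset.sum_filter]
    refine Finset.sum_nbij' (fun k => 2*n - (i0 + k)) (fun l => 2*n - i0 - l) ?_ ?_ ?_ ?_ ?_
    · intro k hk; simp only [Finset.mem_filter, Finset.mem_range] at hk
      simp only [Finset.mem_filter, Finset.mem_Icc]; omega
    · intro l hl; simp only [Finset.mem_filter, Finset.mem_Icc] at hl
      simp only [Finset.mem_filter, Finset.mem_range]; omega
    · intro k hk; simp only [Finset.mem_filter, Finset.mem_range] at hk; omega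
    · intro l hl; simp only [Finset.mem_filter, Finset.mem_Icc] at hl; omega
    · intro k hk
      simp only [Finset.mem_filter, Finset.mem_range] at hk
      have h3 : ((i0:ℤ) + 1 + ((2*n - (i0 + k) : ℕ) : ℤ)) = 2*((n:ℤ)+1) - ((k:ℤ) + 1) := by omega
      rw [h3, hSrefl]
      ring
  rw [hTsplit, hTlow, hTup, hHsum, hH1, hH2]
  have comb : ∀ l ∈ Icc 1 m,
      ((if l ≤ i0 then ξ l * S ((i0:ℤ)+1-l) else 0)
        - (if i0 + 2 ≤ l then -(ξ l * S ((i0:ℤ)+1-l)) else 0))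
      + ((if l ≤ n - 1 - i0 then ξ l * S ((i0:ℤ)+1+l) else 0)
        - (if n + 1 ≤ i0 + l then -(ξ l * S ((i0:ℤ)+1+l)) else 0))
      = ξ l * (2 * c l * S ((i0:ℤ)+1)) := by
    intro l hl
    simp only [Finset.mem_Icc] at hl
    have key : ξ l * S ((i0:ℤ)+1-l) + ξ l * S ((i0:ℤ)+1+l) = ξ l * (2 * c l * S ((i0:ℤ)+1)) := by
      rw [← hSc ((i0:ℤ)+1) l]
      ring
    have e1 : (if l ≤ i0 then ξ l * S ((i0:ℤ)+1-l) else 0)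
        - (if i0 + 2 ≤ l then -(ξ l * S ((i0:ℤ)+1-l)) else 0) = ξ l * S ((i0:ℤ)+1-l) := by
      split_ifs with h1 h2
      · omega
      · ring
      · ring
      · have e : ((i0:ℤ)+1-l) = 0 := by omega
        rw [e, hS0]
        ring
    have e2 : (if l ≤ n - 1 - i0 then ξ l * S ((i0:ℤ)+1+l) else 0)
        - (if n + 1 ≤ i0 + l then -(ξ l * S ((i0:ℤ)+1+l)) else 0) = ξ l * S ((i0:ℤ)+1+l) := by
      split_ifs with h1 h2
      · omega
      · ring
      · ring
      · have e : ((i0:ℤ)+1+l) = (n:ℤ)+1 := by omega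
        rw [e, hSn1]
        ring
    rw [e1, e2]
    linear_combination key
  have hmulsum : ∑ l ∈ Icc 1 m, ξ l * (2 * c l * S ((i0:ℤ)+1))
      = (∑ l ∈ Icc 1 m, ξ l * c l) * (2 * S ((i0:ℤ)+1)) := by
    rw [Finset.sum_mul]
    exact Finset.sum_congr rfl (fun l _ => by ring)
  have hfin := Finset.sum_congr rfl comb
  rw [Finset.sum_add_distrib, Finset.sum_sub_distrib, Finset.sum_sub_distrib, hmulsum] at hfin
  linear_combination hfin


theorem stmt2 (n m : ℕ) (hn : 2 ≤ n) (hm1 : 1 ≤ m) (hm2 : m ≤ n - 1)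
    (α β : ℕ → ℂ)
    (T H : (ℕ → ℂ) → Matrix (Fin n) (Fin n) ℂ)
    (hT : ∀ (ξ : ℕ → ℂ) (i j : Fin n), T ξ i j =
      if max i.1 j.1 - min i.1 j.1 ≤ m then ξ (max i.1 j.1 - min i.1 j.1) else 0)
    (hH : ∀ (ξ : ℕ → ℂ) (i j : Fin n), H ξ i j =
      if i.1 + j.1 + 2 ≤ m then ξ (i.1 + j.1 + 2)
      else if 2 * n - (i.1 + j.1) ≤ m then ξ (2 * n - (i.1 + j.1)) else 0)
    (A B : Matrix (Fin n) (Fin n) ℂ)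
    (hA : A = T α - H α) (hB : B = T β - H β) (hBinv : IsUnit B)
    (h : ℝ) (hh : h = 1 / (n + 1)) :
    ∀ j : Fin n,
      β 0 + 2 * ∑ l ∈ Finset.Icc 1 m, β l * Real.cos (l * (j.1 + 1) * π * h) ≠ 0 →
      let lam : ℂ :=
        (α 0 + 2 * ∑ l ∈ Finset.Icc 1 m, α l * Real.cos (l * (j.1 + 1) * π * h)) /
        (β 0 + 2 * ∑ l ∈ Finset.Icc 1 m, β l * Real.cos (l * (j.1 + 1) * π * h))
      let x : Fin n → ℂ := fun k => (Real.sin ((j.1 + 1) * π * (k.1 + 1) * h) : ℝ)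
      x ≠ 0 ∧ A.mulVec x = lam • B.mulVec x := by
  intro j hden
  set θ : ℝ := (j.1 + 1) * π * h with hθ
  set S : ℤ → ℂ := fun p => ((Real.sin ((p : ℝ) * θ) : ℝ) : ℂ) with hS
  set c : ℕ → ℂ := fun l => ((Real.cos ((l : ℝ) * ((j.1 : ℝ) + 1) * π * h) : ℝ) : ℂ) with hc
  have hn1 : ((n : ℝ) + 1) ≠ 0 := by positivity
  have hθn : ((n : ℝ) + 1) * θ = ((j.1 : ℝ) + 1) * π := by
    rw [hθ, hh]
    field_simp
  have hSneg : ∀ p : ℤ, S (-p) = - S p := by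
    intro p
    simp only [hS]
    have e : ((-p : ℤ) : ℝ) * θ = -((p : ℝ) * θ) := by push_cast; ring
    rw [e, Real.sin_neg, Complex.ofReal_neg]
  have hSrefl : ∀ p : ℤ, S (2*((n : ℤ)+1) - p) = - S p := by
    intro p
    simp only [hS]
    have e : ((2*((n : ℤ)+1) - p : ℤ) : ℝ) * θ = ((j.1 + 1 : ℕ) : ℝ) * (2 * π) - (p : ℝ) * θ := by
      push_cast
      linear_combination (2 : ℝ) * hθn
    rw [e, Real.sin_nat_mul_two_pi_sub, Complex.ofReal_neg]
  have hSc : ∀ (a : ℤ) (l : ℕ), S (a + l) + S (a - l) = 2 * c l * S a := by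
    intro a l
    simp only [hS, hc]
    have e1 : ((a + (l:ℤ) : ℤ) : ℝ) * θ = (a : ℝ) * θ + (l : ℝ) * θ := by push_cast; ring
    have e2 : ((a - (l:ℤ) : ℤ) : ℝ) * θ = (a : ℝ) * θ - (l : ℝ) * θ := by push_cast; ring
    have e3 : (l : ℝ) * ((j.1 : ℝ) + 1) * π * h = (l : ℝ) * θ := by rw [hθ]; ring
    rw [e1, e2, e3, Real.sin_add, Real.sin_sub]
    push_cast
    ring
  set x : Fin n → ℂ := fun k => ((Real.sin (((j.1 : ℝ) + 1) * π * ((k.1 : ℝ) + 1) * h) : ℝ) : ℂ)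
    with hx
  have hxS : ∀ k : Fin n, x k = S ((k.1 : ℤ) + 1) := by
    intro k
    simp only [hx, hS]
    have e : ((((k.1 : ℤ) + 1 : ℤ)) : ℝ) * θ = ((j.1 : ℝ) + 1) * π * ((k.1 : ℝ) + 1) * h := by
      rw [hθ]; push_cast; ring
    rw [e]
  have key : ∀ ξ : ℕ → ℂ, (T ξ - H ξ).mulVec x
      = (ξ 0 + 2 * ∑ l ∈ Finset.Icc 1 m, ξ l * c l) • x := by
    intro ξ
    funext i
    simp only [Matrix.mulVec, dotProduct, Matrix.sub_apply, Pi.smul_apply, smul_eq_mul]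
    have ept : ∀ k : Fin n, (T ξ i k - H ξ i k) * x k
        = (Tf m ξ i.1 k.1 - Hf n m ξ i.1 k.1) * S ((k.1 : ℤ) + 1) := by
      intro k
      rw [hT, hH, hxS]
      simp only [Tf, Hf]
    rw [Finset.sum_congr rfl (fun k _ => ept k),
      row_sum n m hn hm1 hm2 ξ S c hSneg hSrefl hSc i, hxS i]
  have hx0 : x ≠ 0 := by
    intro hcon
    have h0 : x ⟨0, by omega⟩ = 0 := congrFun hcon _
    simp only [hx] at h0
    rw [Complex.ofReal_eq_zero] at h0
    have hhpos : 0 < h := by rw [hh]; positivity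
    have hjn : (j.1 : ℝ) + 1 < (n : ℝ) + 1 := by
      have := j.2; exact_mod_cast Nat.succ_lt_succ this
    have harg1 : 0 < ((j.1 : ℝ) + 1) * π * (((0:ℕ) : ℝ) + 1) * h := by
      have := Real.pi_pos; positivity
    have harg2 : ((j.1 : ℝ) + 1) * π * (((0:ℕ) : ℝ) + 1) * h < π := by
      rw [hh]
      have hπ := Real.pi_pos
      rw [show ((j.1:ℝ)+1) * π * (((0:ℕ):ℝ)+1) * (1/((n:ℝ)+1))
        = π * (((j.1:ℝ)+1) / ((n:ℝ)+1)) by push_cast; ring]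
      have hlt : ((j.1:ℝ)+1) / ((n:ℝ)+1) < 1 := by
        rw [div_lt_one (by positivity)]; exact hjn
      nlinarith
    exact absurd h0 (ne_of_gt (Real.sin_pos_of_pos_of_lt_pi harg1 harg2))
  have heqA : A.mulVec x = (α 0 + 2 * ∑ l ∈ Finset.Icc 1 m, α l * c l) • x := by
    rw [hA]; exact key α
  have heqB : B.mulVec x = (β 0 + 2 * ∑ l ∈ Finset.Icc 1 m, β l * c l) • x := by
    rw [hB]; exact key β
  have hdenc : (β 0 + 2 * ∑ l ∈ Finset.Icc 1 m, β l * c l) ≠ 0 := hden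
  refine ⟨hx0, ?_⟩
  rw [heqA, heqB, smul_smul]
  congr 1
  rw [div_mul_cancel₀ _ hdenc]
end

section
/- Let A = T^(α,m) - H^(α,m) and B = T^(β,m) - H^(β,m), where H is the half-shifted Hankel matrix defined below. Then A x_j = λ_j B x_j where λ_j = (α_0 + 2∑_{l=1}^m α_l cos(l j π h)) / (β_0 + 2∑_{l=1}^m β_l cos(l j π h)) and x_{j,k} = sin(jπ(k - 1/2)h), with h = 1/n, for j = 1,…,n, provided each denominator is nonzero. -/
open Real Matrix Finset

lemma key_sum (n m : ℕ) (hn : 2 ≤ n) (hm : m ≤ n - 1)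
    (ξ : ℕ → ℂ) (X : ℤ → ℂ) (c : ℕ → ℂ)
    (hX1 : ∀ t : ℤ, X (-1 - t) = -X t)
    (hX2 : ∀ t : ℤ, X (2 * n - 1 - t) = -X t)
    (hX3 : ∀ (a : ℤ) (l : ℕ), X (a - l) + X (a + l) = 2 * c l * X a)
    (K : ℕ) (hK : K < n) :
    ∑ i ∈ Finset.range n,
      ((if max K i - min K i ≤ m then ξ (max K i - min K i) else 0) -
        (if K + i + 1 ≤ m then ξ (K + i + 1)
          else if 2 * n - 1 - (K + i) ≤ m then ξ (2 * n - 1 - (K + i)) else 0)) * X i =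
    (ξ 0 + 2 * ∑ l ∈ Finset.Icc 1 m, ξ l * c l) * X K := by
  have hpoint : ∀ i ∈ Finset.range n,
      ((if max K i - min K i ≤ m then ξ (max K i - min K i) else 0) -
        (if K + i + 1 ≤ m then ξ (K + i + 1)
          else if 2 * n - 1 - (K + i) ≤ m then ξ (2 * n - 1 - (K + i)) else 0)) * X i =
      ((if i ≤ K ∧ K - i ≤ m then ξ (K - i) * X i else 0)
      + (if K < i ∧ i - K ≤ m then ξ (i - K) * X i else 0))
      - ((if K + i + 1 ≤ m then ξ (K + i + 1) * X i else 0)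
      + (if 2 * n - 1 - (K + i) ≤ m then ξ (2 * n - 1 - (K + i)) * X i else 0)) := by
    intro i hi
    simp only [Finset.mem_range] at hi
    rcases le_or_gt i K with h' | h'
    · rw [max_eq_left h', min_eq_right h']
      split_ifs <;> first | (exfalso; omega) | ring
    · rw [max_eq_right h'.le, min_eq_left h'.le]
      split_ifs <;> first | (exfalso; omega) | ring
  rw [Finset.sum_congr rfl hpoint, Finset.sum_sub_distrib, Finset.sum_add_distrib,
    Finset.sum_add_distrib, ← Finset.sum_filter, ← Finset.sum_filter, ← Finset.sum_filter,
    ← Finset.sum_filter]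
  have R1 : ∑ i ∈ (Finset.range n).filter (fun i => i ≤ K ∧ K - i ≤ m), ξ (K - i) * X i
      = ∑ l ∈ (Finset.Icc 0 m).filter (fun l => l ≤ K), ξ l * X ((K : ℤ) - l) := by
    refine Finset.sum_nbij' (fun i => K - i) (fun l => K - l) ?_ ?_ ?_ ?_ ?_
    · intro a ha; simp only [Finset.mem_filter, Finset.mem_range, Finset.mem_Icc] at ha ⊢; omega
    · intro a ha; simp only [Finset.mem_filter, Finset.mem_range, Finset.mem_Icc] at ha ⊢; omega
    · intro a ha; simp only [Finset.mem_filter, Finset.mem_range, Finset.mem_Icc] at ha ⊢; omega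
    · intro a ha; simp only [Finset.mem_filter, Finset.mem_range, Finset.mem_Icc] at ha ⊢; omega
    · intro a ha; simp only [Finset.mem_filter, Finset.mem_range, Finset.mem_Icc] at ha
      have : ((K : ℤ) - (K - a : ℕ)) = (a : ℤ) := by omega
      rw [this]
  have R2 : ∑ i ∈ (Finset.range n).filter (fun i => K < i ∧ i - K ≤ m), ξ (i - K) * X i
      = ∑ l ∈ (Finset.Icc 1 m).filter (fun l => l ≤ n - 1 - K), ξ l * X ((K : ℤ) + l) := by
    refine Finset.sum_nbij' (fun i => i - K) (fun l => K + l) ?_ ?_ ?_ ?_ ?_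
    · intro a ha; simp only [Finset.mem_filter, Finset.mem_range, Finset.mem_Icc] at ha ⊢; omega
    · intro a ha; simp only [Finset.mem_filter, Finset.mem_range, Finset.mem_Icc] at ha ⊢; omega
    · intro a ha; simp only [Finset.mem_filter, Finset.mem_range, Finset.mem_Icc] at ha ⊢; omega
    · intro a ha; simp only [Finset.mem_filter, Finset.mem_range, Finset.mem_Icc] at ha ⊢; omega
    · intro a ha; simp only [Finset.mem_filter, Finset.mem_range, Finset.mem_Icc] at ha
      have : ((K : ℤ) + (a - K : ℕ)) = (a : ℤ) := by omega
      rw [this]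
  have R3 : ∑ i ∈ (Finset.range n).filter (fun i => K + i + 1 ≤ m), ξ (K + i + 1) * X i
      = ∑ l ∈ (Finset.Icc 0 m).filter (fun l => ¬ l ≤ K), ξ l * (- X ((K : ℤ) - l)) := by
    refine Finset.sum_nbij' (fun i => K + i + 1) (fun l => l - 1 - K) ?_ ?_ ?_ ?_ ?_
    · intro a ha; simp only [Finset.mem_filter, Finset.mem_range, Finset.mem_Icc] at ha ⊢; omega
    · intro a ha; simp only [Finset.mem_filter, Finset.mem_range, Finset.mem_Icc] at ha ⊢; omega
    · intro a ha; simp only [Finset.mem_filter, Finset.mem_range, Finset.mem_Icc] at ha ⊢; omega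
    · intro a ha; simp only [Finset.mem_filter, Finset.mem_range, Finset.mem_Icc] at ha ⊢; omega
    · intro a ha; simp only [Finset.mem_filter, Finset.mem_range, Finset.mem_Icc] at ha
      have e : ((K : ℤ) - (K + a + 1 : ℕ)) = -1 - a := by push_cast; ring
      rw [e, hX1]; ring
  have R4 : ∑ i ∈ (Finset.range n).filter (fun i => 2 * n - 1 - (K + i) ≤ m),
        ξ (2 * n - 1 - (K + i)) * X i
      = ∑ l ∈ (Finset.Icc 1 m).filter (fun l => ¬ l ≤ n - 1 - K), ξ l * (- X ((K : ℤ) + l)) := by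
    refine Finset.sum_nbij' (fun i => 2 * n - 1 - (K + i)) (fun l => 2 * n - 1 - (K + l)) ?_ ?_ ?_ ?_ ?_
    · intro a ha; simp only [Finset.mem_filter, Finset.mem_range, Finset.mem_Icc] at ha ⊢; omega
    · intro a ha; simp only [Finset.mem_filter, Finset.mem_range, Finset.mem_Icc] at ha ⊢; omega
    · intro a ha; simp only [Finset.mem_filter, Finset.mem_range, Finset.mem_Icc] at ha ⊢; omega
    · intro a ha; simp only [Finset.mem_filter, Finset.mem_range, Finset.mem_Icc] at ha ⊢; omega
    · intro a ha; simp only [Finset.mem_filter, Finset.mem_range, Finset.mem_Icc] at ha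
      have e : ((a : ℤ)) = 2 * n - 1 - ((K : ℤ) + (2 * n - 1 - (K + a) : ℕ)) := by omega
      rw [show (ξ (2 * n - 1 - (K + a)) * X a : ℂ)
          = ξ (2 * n - 1 - (K + a)) * X (2 * n - 1 - ((K : ℤ) + (2 * n - 1 - (K + a) : ℕ))) by
        rw [← e], hX2]
  rw [R1, R2, R3, R4]
  have neg3 : ∑ l ∈ (Finset.Icc 0 m).filter (fun l => ¬ l ≤ K), ξ l * (- X ((K : ℤ) - l))
      = - ∑ l ∈ (Finset.Icc 0 m).filter (fun l => ¬ l ≤ K), ξ l * X ((K : ℤ) - l) := by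
    rw [← Finset.sum_neg_distrib]; exact Finset.sum_congr rfl fun l _ => by ring
  have neg4 : ∑ l ∈ (Finset.Icc 1 m).filter (fun l => ¬ l ≤ n - 1 - K), ξ l * (- X ((K : ℤ) + l))
      = - ∑ l ∈ (Finset.Icc 1 m).filter (fun l => ¬ l ≤ n - 1 - K), ξ l * X ((K : ℤ) + l) := by
    rw [← Finset.sum_neg_distrib]; exact Finset.sum_congr rfl fun l _ => by ring
  rw [neg3, neg4]
  have comb1 := Finset.sum_filter_add_sum_filter_not (Finset.Icc 0 m) (fun l => l ≤ K)
    (fun l => ξ l * X ((K : ℤ) - l))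
  have comb2 := Finset.sum_filter_add_sum_filter_not (Finset.Icc 1 m) (fun l => l ≤ n - 1 - K)
    (fun l => ξ l * X ((K : ℤ) + l))
  have step : ∑ l ∈ (Finset.Icc 0 m).filter (fun l => l ≤ K), ξ l * X ((K : ℤ) - l)
      + ∑ l ∈ (Finset.Icc 1 m).filter (fun l => l ≤ n - 1 - K), ξ l * X ((K : ℤ) + l)
      - (- ∑ l ∈ (Finset.Icc 0 m).filter (fun l => ¬ l ≤ K), ξ l * X ((K : ℤ) - l)
        + - ∑ l ∈ (Finset.Icc 1 m).filter (fun l => ¬ l ≤ n - 1 - K), ξ l * X ((K : ℤ) + l))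
      = ∑ l ∈ Finset.Icc 0 m, ξ l * X ((K : ℤ) - l)
        + ∑ l ∈ Finset.Icc 1 m, ξ l * X ((K : ℤ) + l) := by
    rw [← comb1, ← comb2]; ring
  rw [step]
  have hins : Finset.Icc 0 m = insert 0 (Finset.Icc 1 m) := by
    ext a; simp only [Finset.mem_Icc, Finset.mem_insert]; omega
  rw [hins, Finset.sum_insert (by simp)]
  simp only [Nat.cast_zero, sub_zero]
  rw [add_assoc, ← Finset.sum_add_distrib]
  have : ∑ l ∈ Finset.Icc 1 m, (ξ l * X ((K : ℤ) - l) + ξ l * X ((K : ℤ) + l))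
      = ∑ l ∈ Finset.Icc 1 m, ξ l * (2 * c l * X K) := by
    refine Finset.sum_congr rfl fun l _ => ?_
    rw [← mul_add, hX3]
  rw [this, add_mul]
  congr 1
  rw [Finset.mul_sum, Finset.sum_mul]
  exact Finset.sum_congr rfl fun l _ => by ring

theorem stmt3 (n m : ℕ) (hn : 2 ≤ n) (hm1 : 1 ≤ m) (hm2 : m ≤ n - 1)
    (α β : ℕ → ℂ)
    (T H : (ℕ → ℂ) → Matrix (Fin n) (Fin n) ℂ)
    (hT : ∀ (ξ : ℕ → ℂ) (i j : Fin n), T ξ i j =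
      if max i.1 j.1 - min i.1 j.1 ≤ m then ξ (max i.1 j.1 - min i.1 j.1) else 0)
    (hH : ∀ (ξ : ℕ → ℂ) (i j : Fin n), H ξ i j =
      if i.1 + j.1 + 1 ≤ m then ξ (i.1 + j.1 + 1)
      else if 2 * n - 1 - (i.1 + j.1) ≤ m then ξ (2 * n - 1 - (i.1 + j.1)) else 0)
    (A B : Matrix (Fin n) (Fin n) ℂ)
    (hA : A = T α - H α) (hB : B = T β - H β)
    (h : ℝ) (hh : h = 1 / n) :
    ∀ j : Fin n,
      β 0 + 2 * ∑ l ∈ Finset.Icc 1 m, β l * Real.cos (l * (j.1 + 1) * π * h) ≠ 0 →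
      let lam : ℂ :=
        (α 0 + 2 * ∑ l ∈ Finset.Icc 1 m, α l * Real.cos (l * (j.1 + 1) * π * h)) /
        (β 0 + 2 * ∑ l ∈ Finset.Icc 1 m, β l * Real.cos (l * (j.1 + 1) * π * h))
      let x : Fin n → ℂ := fun k =>
        (Real.sin ((j.1 + 1) * π * ((k.1 : ℝ) + 1 - 1 / 2) * h) : ℝ)
      x ≠ 0 ∧ A.mulVec x = lam • B.mulVec x := by
  intro j hden lam x
  have hn0 : (n : ℝ) ≠ 0 := by positivity
  have hnh : (n : ℝ) * h = 1 := by rw [hh]; field_simp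
  set X : ℤ → ℂ := fun t => ((Real.sin ((j.1 + 1) * π * ((t : ℝ) + 1 / 2) * h) : ℝ) : ℂ) with hX
  set c : ℕ → ℂ := fun l => ((Real.cos (l * (j.1 + 1) * π * h) : ℝ) : ℂ) with hc
  have hX1 : ∀ t : ℤ, X (-1 - t) = -X t := by
    intro t
    simp only [hX]
    rw [← Complex.ofReal_neg, ← Real.sin_neg]
    congr 1
    push_cast
    ring
  have hX2 : ∀ t : ℤ, X (2 * n - 1 - t) = -X t := by
    intro t
    simp only [hX]
    rw [← Complex.ofReal_neg, Complex.ofReal_inj]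
    have e : ((j.1 : ℝ) + 1) * π * (((2 * (n : ℤ) - 1 - t : ℤ) : ℝ) + 1 / 2) * h
        = ((j.1 + 1 : ℕ) : ℝ) * (2 * π) - ((j.1 : ℝ) + 1) * π * ((t : ℝ) + 1 / 2) * h := by
      push_cast
      have : ((j.1 : ℝ) + 1) * π * (2 * (n : ℝ) - 1 - (t : ℝ) + 1 / 2) * h
          = ((j.1 : ℝ) + 1) * (2 * π) * ((n : ℝ) * h)
            - ((j.1 : ℝ) + 1) * π * ((t : ℝ) + 1 / 2) * h := by ring
      rw [this, hnh]; ring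
    have hs : Real.sin (((j.1 + 1 : ℕ) : ℝ) * (2 * π)) = 0 := by
      rw [show (((j.1 + 1 : ℕ) : ℝ)) * (2 * π) = ((2 * (j.1 + 1) : ℕ) : ℝ) * π by push_cast; ring]
      exact Real.sin_nat_mul_pi _
    have hcc : Real.cos (((j.1 + 1 : ℕ) : ℝ) * (2 * π)) = 1 := Real.cos_nat_mul_two_pi _
    rw [e, Real.sin_sub, hs, hcc]
    ring
  have hX3 : ∀ (a : ℤ) (l : ℕ), X (a - l) + X (a + l) = 2 * c l * X a := by
    intro a l
    simp only [hX, hc]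
    have e1 : ((j.1 : ℝ) + 1) * π * (((a - (l : ℤ) : ℤ) : ℝ) + 1 / 2) * h
        = ((j.1 : ℝ) + 1) * π * ((a : ℝ) + 1 / 2) * h - (l : ℝ) * ((j.1 : ℝ) + 1) * π * h := by
      push_cast; ring
    have e2 : ((j.1 : ℝ) + 1) * π * (((a + (l : ℤ) : ℤ) : ℝ) + 1 / 2) * h
        = ((j.1 : ℝ) + 1) * π * ((a : ℝ) + 1 / 2) * h + (l : ℝ) * ((j.1 : ℝ) + 1) * π * h := by
      push_cast; ring
    have hre : Real.sin (((j.1 : ℝ) + 1) * π * (((a - (l : ℤ) : ℤ) : ℝ) + 1 / 2) * h)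
        + Real.sin (((j.1 : ℝ) + 1) * π * (((a + (l : ℤ) : ℤ) : ℝ) + 1 / 2) * h)
        = 2 * Real.cos ((l : ℝ) * ((j.1 : ℝ) + 1) * π * h)
          * Real.sin (((j.1 : ℝ) + 1) * π * ((a : ℝ) + 1 / 2) * h) := by
      rw [e1, e2, Real.sin_sub, Real.sin_add]; ring
    exact_mod_cast hre
  have hxX : ∀ k : Fin n, x k = X k.1 := by
    intro k
    simp only [hX, x]
    congr 2
    push_cast
    ring
  have hmain : ∀ (ξ : ℕ → ℂ) (k : Fin n), (T ξ - H ξ).mulVec x k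
      = (ξ 0 + 2 * ∑ l ∈ Finset.Icc 1 m, ξ l * c l) * x k := by
    intro ξ k
    have e1 : (T ξ - H ξ).mulVec x k = ∑ i ∈ Finset.range n,
        ((if max k.1 i - min k.1 i ≤ m then ξ (max k.1 i - min k.1 i) else 0) -
          (if k.1 + i + 1 ≤ m then ξ (k.1 + i + 1)
            else if 2 * n - 1 - (k.1 + i) ≤ m then ξ (2 * n - 1 - (k.1 + i)) else 0)) * X i := by
      rw [← Fin.sum_univ_eq_sum_range (fun i =>
        ((if max k.1 i - min k.1 i ≤ m then ξ (max k.1 i - min k.1 i) else 0) -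
          (if k.1 + i + 1 ≤ m then ξ (k.1 + i + 1)
            else if 2 * n - 1 - (k.1 + i) ≤ m then ξ (2 * n - 1 - (k.1 + i)) else 0)) * X i) n]
      simp only [Matrix.mulVec, dotProduct, Matrix.sub_apply, hT, hH]
      exact Finset.sum_congr rfl fun i _ => by rw [hxX i]
    rw [e1, key_sum n m hn hm2 ξ X c hX1 hX2 hX3 k.1 k.2, hxX k]
  have hAx : ∀ k : Fin n, A.mulVec x k
      = (α 0 + 2 * ∑ l ∈ Finset.Icc 1 m, α l * c l) * x k := by
    intro k; rw [hA]; exact hmain α k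
  have hBx : ∀ k : Fin n, B.mulVec x k
      = (β 0 + 2 * ∑ l ∈ Finset.Icc 1 m, β l * c l) * x k := by
    intro k; rw [hB]; exact hmain β k
  have hdenc : (β 0 + 2 * ∑ l ∈ Finset.Icc 1 m, β l * c l) ≠ 0 := hden
  constructor
  · intro h0
    have hpos : 0 < Real.sin (((j.1 : ℝ) + 1) * π * (((0 : ℕ) : ℝ) + 1 - 1 / 2) * h) := by
      have e : ((j.1 : ℝ) + 1) * π * (((0 : ℕ) : ℝ) + 1 - 1 / 2) * h
          = π * (((j.1 : ℝ) + 1) / (2 * n)) := by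
        rw [hh]; push_cast; ring
      rw [e]
      apply Real.sin_pos_of_pos_of_lt_pi
      · have hn' : (0 : ℝ) < n := by positivity
        have : 0 < ((j.1 : ℝ) + 1) / (2 * n) := by positivity
        have := Real.pi_pos
        positivity
      · have hj : ((j.1 : ℝ) + 1) ≤ n := by
          have := j.2; exact_mod_cast Nat.succ_le_of_lt this
        have h2n : (0 : ℝ) < 2 * n := by positivity
        have hlt : ((j.1 : ℝ) + 1) / (2 * n) < 1 := by
          rw [div_lt_one h2n]; nlinarith
        nlinarith [Real.pi_pos]
    have h1 : ((Real.sin (((j.1 : ℝ) + 1) * π * (((0 : ℕ) : ℝ) + 1 - 1 / 2) * h) : ℝ) : ℂ) = 0 :=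
      congrFun h0 ⟨0, by omega⟩
    rw [Complex.ofReal_eq_zero] at h1
    linarith
  · funext k
    rw [hAx k, Pi.smul_apply, hBx k, smul_eq_mul]
    have : lam * (β 0 + 2 * ∑ l ∈ Finset.Icc 1 m, β l * c l)
        = (α 0 + 2 * ∑ l ∈ Finset.Icc 1 m, α l * c l) := by
      simp only [lam, hc]
      exact div_mul_cancel₀ _ hdenc
    rw [← this]
    ring
end

section
/- Let A = T^(α,m) + H^(α,m) and B = T^(β,m) + H^(β,m), with the Hankel matrix H defined below. Then A x_{j+1} = λ_{j+1} B x_{j+1} where λ_{j+1} = (α_0 + 2∑_{l=1}^m α_l cos(l j π h)) / (β_0 + 2∑_{l=1}^m β_l cos(l j π h)) and x_{j+1,k} = cos(jπ(k - 1/2)h), with h = 1/n, for j = 0,…,n-1 and k = 1,…,n, provided each denominator is nonzero. -/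
open Real Matrix Finset

lemma key5 (n m j : ℕ) (hn : 2 ≤ n) (hm2 : m ≤ n - 1)
    (ξ : ℕ → ℂ) (i : ℕ) (hi : i < n) :
    ∑ k ∈ Finset.range n,
      ((if max i k - min i k ≤ m then ξ (max i k - min i k) else 0) +
       (if i + k + 1 ≤ m then ξ (i + k + 1)
        else if 2 * n - 1 - (i + k) ≤ m then ξ (2 * n - 1 - (i + k)) else 0)) *
      ((Real.cos ((j:ℝ) * π * ((k:ℝ) + 1/2) / n) : ℝ) : ℂ)
    = (ξ 0 + 2 * ∑ l ∈ Finset.Icc 1 m, ξ l * ((Real.cos ((l:ℝ) * j * π / n) : ℝ) : ℂ)) *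
      ((Real.cos ((j:ℝ) * π * ((i:ℝ) + 1/2) / n) : ℝ) : ℂ) := by
  have hn0 : (n:ℝ) ≠ 0 := Nat.cast_ne_zero.mpr (by omega)
  set fr : ℤ → ℝ := fun t => Real.cos ((j:ℝ) * π * ((t:ℝ) + 1/2) / n) with hfr
  have hfr1 : ∀ t : ℤ, fr (-1 - t) = fr t := by
    intro t
    simp only [hfr]
    rw [show (j:ℝ) * π * (((-1 - t : ℤ):ℝ) + 1/2) / n = -((j:ℝ) * π * ((t:ℝ) + 1/2) / n) by
      push_cast; ring, Real.cos_neg]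
  have hfr2 : ∀ t : ℤ, fr (2*(n:ℤ) - 1 - t) = fr t := by
    intro t
    simp only [hfr]
    rw [show (j:ℝ) * π * (((2*(n:ℤ) - 1 - t : ℤ):ℝ) + 1/2) / n
        = (j:ℝ) * (2 * π) - (j:ℝ) * π * ((t:ℝ) + 1/2) / n by
      push_cast; field_simp; ring, Real.cos_nat_mul_two_pi_sub]
  have hxk : ∀ k : ℕ, ((Real.cos ((j:ℝ) * π * ((k:ℝ) + 1/2) / n) : ℝ) : ℂ) = ((fr (k:ℤ) : ℝ) : ℂ) := by
    intro k; simp [hfr]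
  simp only [hxk]
  set S : Finset ℤ := Finset.Icc (-(m:ℤ)) (m:ℤ) with hS
  set φ : ℤ → ℕ := fun l =>
    if (i:ℤ) + l < 0 then (-(i:ℤ) - l - 1).toNat
    else if (n:ℤ) ≤ (i:ℤ) + l then (2*(n:ℤ) - 1 - (i:ℤ) - l).toNat
    else ((i:ℤ) + l).toNat with hφdef
  have hmaps : ∀ l ∈ S, φ l ∈ Finset.range n := by
    intro l hl
    simp only [hS, Finset.mem_Icc] at hl
    simp only [hφdef, Finset.mem_range]
    split_ifs <;> omega
  have hC : ∑ k ∈ Finset.range n,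
      ((if max i k - min i k ≤ m then ξ (max i k - min i k) else 0) +
       (if i + k + 1 ≤ m then ξ (i + k + 1)
        else if 2 * n - 1 - (i + k) ≤ m then ξ (2 * n - 1 - (i + k)) else 0)) *
      ((fr (k:ℤ) : ℝ) : ℂ)
      = ∑ l ∈ S, ξ l.natAbs * ((fr ((i:ℤ) + l) : ℝ) : ℂ) := by
    rw [← Finset.sum_fiberwise_of_maps_to hmaps (fun l => ξ l.natAbs * ((fr ((i:ℤ) + l) : ℝ) : ℂ))]
    refine Finset.sum_congr rfl ?_
    intro k hk
    simp only [Finset.mem_range] at hk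
    have hfrk : ∀ l ∈ S.filter (fun l => φ l = k), fr ((i:ℤ) + l) = fr (k:ℤ) := by
      intro l hl
      simp only [hS, Finset.mem_filter, Finset.mem_Icc] at hl
      obtain ⟨⟨h1, h2⟩, hφ⟩ := hl
      simp only [hφdef] at hφ
      split_ifs at hφ with c1 c2
      · rw [show (i:ℤ) + l = -1 - (k:ℤ) by omega, hfr1]
      · rw [show (i:ℤ) + l = 2*(n:ℤ) - 1 - (k:ℤ) by omega, hfr2]
      · rw [show (i:ℤ) + l = (k:ℤ) by omega]
    rw [Finset.sum_congr rfl (fun l hl => by rw [hfrk l hl]), ← Finset.sum_mul]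
    set l1 : ℤ := (k:ℤ) - i with hl1
    set l2 : ℤ := -(i:ℤ) - k - 1 with hl2
    set l3 : ℤ := 2*(n:ℤ) - 1 - i - k with hl3
    have hφ1 : φ l1 = k := by
      simp only [hφdef]; rw [if_neg (by omega), if_neg (by omega)]; omega
    have hφ2 : φ l2 = k := by
      simp only [hφdef]; rw [if_pos (by omega)]; omega
    have hφ3 : φ l3 = k := by
      simp only [hφdef]; rw [if_neg (by omega), if_pos (by omega)]; omega
    have hsub : S.filter (fun l => φ l = k) ⊆ ({l1, l2, l3} : Finset ℤ) := by
      intro l hl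
      simp only [hS, Finset.mem_filter, Finset.mem_Icc] at hl
      obtain ⟨⟨h1, h2⟩, hφ⟩ := hl
      simp only [hφdef] at hφ
      simp only [Finset.mem_insert, Finset.mem_singleton]
      split_ifs at hφ with c1 c2 <;> omega
    have hfe : S.filter (fun l => φ l = k)
        = ({l1, l2, l3} : Finset ℤ).filter (fun l => l ∈ S.filter (fun l => φ l = k)) := by
      ext l
      constructor
      · intro hl; exact Finset.mem_filter.mpr ⟨hsub hl, hl⟩
      · intro hl; exact (Finset.mem_filter.mp hl).2
    rw [hfe, Finset.sum_filter]
    rw [show ({l1, l2, l3} : Finset ℤ) = insert l1 (insert l2 {l3}) from rfl,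
      Finset.sum_insert (by simp only [Finset.mem_insert, Finset.mem_singleton]; push_neg; omega),
      Finset.sum_insert (by simp only [Finset.mem_singleton]; omega),
      Finset.sum_singleton]
    have c1 : l1 ∈ S.filter (fun l => φ l = k) ↔ max i k - min i k ≤ m := by
      simp only [hS, Finset.mem_filter, Finset.mem_Icc, hφ1, and_true]; omega
    have c2 : l2 ∈ S.filter (fun l => φ l = k) ↔ i + k + 1 ≤ m := by
      simp only [hS, Finset.mem_filter, Finset.mem_Icc, hφ2, and_true]; omega
    have c3 : l3 ∈ S.filter (fun l => φ l = k) ↔ 2 * n - 1 - (i + k) ≤ m := by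
      simp only [hS, Finset.mem_filter, Finset.mem_Icc, hφ3, and_true]; omega
    have e1 : l1.natAbs = max i k - min i k := by omega
    have e2 : l2.natAbs = i + k + 1 := by omega
    have e3 : l3.natAbs = 2 * n - 1 - (i + k) := by omega
    simp only [c1, c2, c3, e1, e2, e3]
    split_ifs <;> first | (exfalso; omega) | ring
  rw [hC]
  -- step B
  have hu : S = Finset.Icc (-(m:ℤ)) (-1) ∪ Finset.Icc 0 (m:ℤ) := by
    ext l; simp only [hS, Finset.mem_Icc, Finset.mem_union]; omega
  have hdisj : Disjoint (Finset.Icc (-(m:ℤ)) (-1)) (Finset.Icc (0:ℤ) (m:ℤ)) := by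
    rw [Finset.disjoint_left]
    intro a ha hb
    simp only [Finset.mem_Icc] at ha hb
    omega
  rw [hu, Finset.sum_union hdisj]
  have hneg : Finset.Icc (-(m:ℤ)) (-1) = Finset.image (fun l : ℕ => -(l:ℤ)) (Finset.Icc 1 m) := by
    ext l
    simp only [Finset.mem_Icc, Finset.mem_image]
    constructor
    · intro hl; exact ⟨l.natAbs, by omega, by omega⟩
    · rintro ⟨a, ha, rfl⟩; omega
  have hpos : Finset.Icc (0:ℤ) (m:ℤ)
      = insert 0 (Finset.image (fun l : ℕ => (l:ℤ)) (Finset.Icc 1 m)) := by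
    ext l
    simp only [Finset.mem_Icc, Finset.mem_image, Finset.mem_insert]
    constructor
    · intro hl
      rcases eq_or_ne l 0 with rfl | h0
      · exact Or.inl rfl
      · exact Or.inr ⟨l.natAbs, by omega, by omega⟩
    · rintro (rfl | ⟨a, ha, rfl⟩) <;> omega
  rw [hneg, hpos, Finset.sum_image (fun a _ b _ hab => by omega),
    Finset.sum_insert (by simp only [Finset.mem_image, Finset.mem_Icc]; push_neg; intro a ha; omega),
    Finset.sum_image (fun a _ b _ hab => by omega)]
  have hterm : ∀ a ∈ Finset.Icc 1 m,
      ξ ((-(a:ℤ)).natAbs) * ((fr ((i:ℤ) + -(a:ℤ)) : ℝ) : ℂ)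
        + ξ (((a:ℤ)).natAbs) * ((fr ((i:ℤ) + (a:ℤ)) : ℝ) : ℂ)
      = 2 * (ξ a * ((Real.cos ((a:ℝ) * j * π / n) : ℝ) : ℂ)) * ((fr (i:ℤ) : ℝ) : ℂ) := by
    intro a ha
    have hr : fr ((i:ℤ) + -(a:ℤ)) + fr ((i:ℤ) + (a:ℤ))
        = 2 * Real.cos ((a:ℝ) * j * π / n) * fr (i:ℤ) := by
      simp only [hfr]
      rw [show (j:ℝ) * π * ((((i:ℤ) + -(a:ℤ) : ℤ):ℝ) + 1/2) / n
          = (j:ℝ) * π * (((i:ℤ):ℝ) + 1/2) / n - (a:ℝ) * j * π / n by push_cast; ring,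
        show (j:ℝ) * π * ((((i:ℤ) + (a:ℤ) : ℤ):ℝ) + 1/2) / n
          = (j:ℝ) * π * (((i:ℤ):ℝ) + 1/2) / n + (a:ℝ) * j * π / n by push_cast; ring,
        Real.cos_sub, Real.cos_add]
      ring
    have hna : (-(a:ℤ)).natAbs = a := by omega
    have hpa : ((a:ℤ)).natAbs = a := by omega
    rw [hna, hpa]
    calc ξ a * ((fr ((i:ℤ) + -(a:ℤ)) : ℝ) : ℂ) + ξ a * ((fr ((i:ℤ) + (a:ℤ)) : ℝ) : ℂ)
        = ξ a * (((fr ((i:ℤ) + -(a:ℤ)) + fr ((i:ℤ) + (a:ℤ)) : ℝ)) : ℂ) := by push_cast; ring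
      _ = ξ a * (((2 * Real.cos ((a:ℝ) * j * π / n) * fr (i:ℤ) : ℝ)) : ℂ) := by rw [hr]
      _ = 2 * (ξ a * ((Real.cos ((a:ℝ) * j * π / n) : ℝ) : ℂ)) * ((fr (i:ℤ) : ℝ) : ℂ) := by
          push_cast; ring
  rw [show ((0:ℤ).natAbs) = 0 from rfl, show ((i:ℤ) + 0) = (i:ℤ) from add_zero _,
    add_left_comm, ← Finset.sum_add_distrib, Finset.sum_congr rfl hterm,
    ← Finset.sum_mul, ← Finset.mul_sum]
  ring


theorem stmt5 (n m : ℕ) (hn : 2 ≤ n) (hm1 : 1 ≤ m) (hm2 : m ≤ n - 1)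
    (α β : ℕ → ℂ)
    (T H : (ℕ → ℂ) → Matrix (Fin n) (Fin n) ℂ)
    (hT : ∀ (ξ : ℕ → ℂ) (i j : Fin n), T ξ i j =
      if max i.1 j.1 - min i.1 j.1 ≤ m then ξ (max i.1 j.1 - min i.1 j.1) else 0)
    (hH : ∀ (ξ : ℕ → ℂ) (i j : Fin n), H ξ i j =
      if i.1 + j.1 + 1 ≤ m then ξ (i.1 + j.1 + 1)
      else if 2 * n - 1 - (i.1 + j.1) ≤ m then ξ (2 * n - 1 - (i.1 + j.1)) else 0)
    (A B : Matrix (Fin n) (Fin n) ℂ)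
    (hA : A = T α + H α) (hB : B = T β + H β)
    (h : ℝ) (hh : h = 1 / n) :
    ∀ j : Fin n,
      β 0 + 2 * ∑ l ∈ Finset.Icc 1 m, β l * Real.cos (l * j.1 * π * h) ≠ 0 →
      let lam : ℂ :=
        (α 0 + 2 * ∑ l ∈ Finset.Icc 1 m, α l * Real.cos (l * j.1 * π * h)) /
        (β 0 + 2 * ∑ l ∈ Finset.Icc 1 m, β l * Real.cos (l * j.1 * π * h))
      let x : Fin n → ℂ := fun k =>
        (Real.cos (j.1 * π * ((k.1 : ℝ) + 1 - 1 / 2) * h) : ℝ)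
      x ≠ 0 ∧ A.mulVec x = lam • B.mulVec x := by
  intro j hden
  set x : Fin n → ℂ := fun k =>
    ((Real.cos ((j.1:ℝ) * π * ((k.1 : ℝ) + 1 - 1 / 2) * h) : ℝ) : ℂ) with hx
  have hnR : (0:ℝ) < n := by positivity
  -- x ≠ 0
  have hx0 : x ≠ 0 := by
    intro h0
    have h1 := congrFun h0 ⟨0, by omega⟩
    simp only [hx, Pi.zero_apply, Complex.ofReal_eq_zero] at h1
    have hpos : 0 < Real.cos ((j.1:ℝ) * π * (((0:ℕ):ℝ) + 1 - 1 / 2) * h) := by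
      apply Real.cos_pos_of_mem_Ioo
      have hjn : (j.1:ℝ) < n := by exact_mod_cast j.2
      have hj0 : (0:ℝ) ≤ (j.1:ℝ) := by positivity
      have hinv : (0:ℝ) < 1/n := by positivity
      have hn1 : (n:ℝ) * (1/n) = 1 := by field_simp
      constructor
      · rw [hh]
        have hge : (0:ℝ) ≤ (j.1:ℝ) * π * (((0:ℕ):ℝ) + 1 - 1/2) * (1/n) := by positivity
        linarith [Real.pi_pos]
      · rw [hh]
        nlinarith [Real.pi_pos, mul_lt_mul_of_pos_right hjn hinv]
    rw [h1] at hpos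
    exact lt_irrefl 0 hpos
  -- main eigen identity
  have hmain : ∀ ξ : ℕ → ℂ,
      (T ξ + H ξ).mulVec x
        = (ξ 0 + 2 * ∑ l ∈ Finset.Icc 1 m, ξ l * (Real.cos ((l:ℝ) * j.1 * π * h) : ℝ)) • x := by
    intro ξ
    funext i
    simp only [Matrix.mulVec, dotProduct, Matrix.add_apply, hT, hH,
      Pi.smul_apply, smul_eq_mul, hx]
    have hcos1 : ∀ k : ℕ, ((Real.cos ((j.1:ℝ) * π * ((k:ℝ) + 1 - 1/2) * h) : ℝ) : ℂ)
        = ((Real.cos ((j.1:ℝ) * π * ((k:ℝ) + 1/2) / n) : ℝ) : ℂ) := by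
      intro k
      congr 1
      rw [hh]; ring
    have hcos2 : ∀ l : ℕ, ((Real.cos ((l:ℝ) * (j.1:ℝ) * π * h) : ℝ) : ℂ)
        = ((Real.cos ((l:ℝ) * (j.1:ℝ) * π / n) : ℝ) : ℂ) := by
      intro l
      congr 2
      rw [hh]; ring
    simp only [hcos1, hcos2]
    rw [Fin.sum_univ_eq_sum_range (fun k : ℕ =>
      ((if max i.1 k - min i.1 k ≤ m then ξ (max i.1 k - min i.1 k) else 0) +
       (if i.1 + k + 1 ≤ m then ξ (i.1 + k + 1)
        else if 2 * n - 1 - (i.1 + k) ≤ m then ξ (2 * n - 1 - (i.1 + k)) else 0)) *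
      ((Real.cos ((j.1:ℝ) * π * ((k:ℝ) + 1/2) / n) : ℝ) : ℂ)) n]
    exact key5 n m j.1 hn hm2 ξ i.1 i.2
  have hAx : A.mulVec x
      = (α 0 + 2 * ∑ l ∈ Finset.Icc 1 m, α l * (Real.cos ((l:ℝ) * j.1 * π * h) : ℝ)) • x := by
    rw [hA]; exact hmain α
  have hBx : B.mulVec x
      = (β 0 + 2 * ∑ l ∈ Finset.Icc 1 m, β l * (Real.cos ((l:ℝ) * j.1 * π * h) : ℝ)) • x := by
    rw [hB]; exact hmain β
  refine ⟨hx0, ?_⟩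
  rw [hAx, hBx, smul_smul, div_mul_cancel₀ _ hden]
end

section
/- For the corner-overlapped block-diagonal matrices A = G^(α) and B = G^(β) of dimension (2n+1)×(2n+1), α_3/β_3 is an eigenvalue of the generalized eigenvalue problem A x = λ B x, with eigenvector x given by x_{2j+1} = (-1)^j for j = 0,…,n and x_{2j} = 0 for j = 1,…,n (provided β_3 ≠ 0). -/
open Matrix

theorem stmt7 (n : ℕ) (hn : 1 ≤ n)
    (α β : ℕ → ℂ) (hβ3 : β 3 ≠ 0)
    (G : (ℕ → ℂ) → Matrix (Fin (2 * n + 1)) (Fin (2 * n + 1)) ℂ)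
    (hG : ∀ (ξ : ℕ → ℂ) (i j : Fin (2 * n + 1)), G ξ i j =
      if i = j then (if i.1 % 2 = 0 then ξ 3 else ξ 0)
      else if i.1 + 1 = j.1 ∨ j.1 + 1 = i.1 then ξ 1
      else if i.1 % 2 = 1 ∧ j.1 % 2 = 1 ∧ (i.1 + 2 = j.1 ∨ j.1 + 2 = i.1) then ξ 2
      else 0)
    (A B : Matrix (Fin (2 * n + 1)) (Fin (2 * n + 1)) ℂ)
    (hA : A = G α) (hB : B = G β) :
    let x : Fin (2 * n + 1) → ℂ := fun i => if i.1 % 2 = 0 then (-1 : ℂ) ^ (i.1 / 2) else 0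
    x ≠ 0 ∧ A.mulVec x = (α 3 / β 3) • B.mulVec x := by
  intro x
  have hxdef : ∀ i : Fin (2 * n + 1), x i = if i.1 % 2 = 0 then (-1 : ℂ) ^ (i.1 / 2) else 0 :=
    fun i => rfl
  have key : ∀ ξ : ℕ → ℂ, (G ξ).mulVec x = ξ 3 • x := by
    intro ξ
    funext i
    simp only [mulVec, dotProduct, Pi.smul_apply, smul_eq_mul]
    rcases Nat.even_or_odd i.1 with he | ho
    · have he' : i.1 % 2 = 0 := Nat.even_iff.mp he
      rw [Finset.sum_eq_single i]
      · rw [hG, hxdef]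
        simp [he']
      · intro j _ hj
        have hji : j.1 ≠ i.1 := fun h => hj (Fin.ext h)
        rw [hG, hxdef]
        by_cases hj2 : j.1 % 2 = 0
        · have h1 : ¬ (i = j) := fun h => hji (congrArg Fin.val h).symm
          have h2 : ¬ (i.1 + 1 = j.1 ∨ j.1 + 1 = i.1) := by omega
          have h3 : ¬ (i.1 % 2 = 1 ∧ j.1 % 2 = 1 ∧ (i.1 + 2 = j.1 ∨ j.1 + 2 = i.1)) := by
            omega
          simp [h1, h2, h3]
        · simp [hj2]
      · intro h
        exact absurd (Finset.mem_univ i) h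
    · have ho' : i.1 % 2 = 1 := Nat.odd_iff.mp ho
      have hi1 : 1 ≤ i.1 := by omega
      have hi2 : i.1 + 1 < 2 * n + 1 := by omega
      set k := i.1 / 2 with hk
      have hik : i.1 = 2 * k + 1 := by omega
      set j1 : Fin (2 * n + 1) := ⟨i.1 - 1, by omega⟩ with hj1
      set j2 : Fin (2 * n + 1) := ⟨i.1 + 1, hi2⟩ with hj2
      have hptw : ∀ j : Fin (2 * n + 1), G ξ i j * x j =
          (if j = j1 then ξ 1 * (-1 : ℂ) ^ k else 0) +
          (if j = j2 then ξ 1 * (-1 : ℂ) ^ (k + 1) else 0) := by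
        intro j
        by_cases h1 : j = j1
        · subst h1
          have hne : i ≠ j1 := by
            intro h; have := congrArg Fin.val h; simp [hj1] at this; omega
          have hadj : i.1 + 1 = j1.1 ∨ j1.1 + 1 = i.1 := by right; simp [hj1]; omega
          have hne2 : j1 ≠ j2 := Fin.ne_of_val_ne (by show i.1 - 1 ≠ i.1 + 1; omega)
          have hjv : j1.1 % 2 = 0 := by simp [hj1]; omega
          have hjd : j1.1 / 2 = k := by simp [hj1]; omega
          rw [hG, hxdef]
          simp [hne, hadj, hne2, hjv, hjd]
        · by_cases h2 : j = j2
          · subst h2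
            have hne : i ≠ j2 := by
              intro h; have := congrArg Fin.val h; simp [hj2] at this
            have hadj : i.1 + 1 = j2.1 ∨ j2.1 + 1 = i.1 := by left; simp [hj2]
            have hjv : j2.1 % 2 = 0 := by simp [hj2]; omega
            have hjd : j2.1 / 2 = k + 1 := by simp [hj2]; omega
            rw [hG, hxdef]
            simp [hne, hadj, h1, hjv, hjd]
          · have hv1 : j.1 ≠ i.1 - 1 := fun h => h1 (Fin.ext (by simp [hj1, h]))
            have hv2 : j.1 ≠ i.1 + 1 := fun h => h2 (Fin.ext (by simp [hj2, h]))
            rw [hG, hxdef]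
            by_cases hjp : j.1 % 2 = 0
            · have hd1 : ¬ (i = j) := by
                intro h; have := congrArg Fin.val h; omega
              have hd2 : ¬ (i.1 + 1 = j.1 ∨ j.1 + 1 = i.1) := by omega
              have hd3 : ¬ (i.1 % 2 = 1 ∧ j.1 % 2 = 1 ∧ (i.1 + 2 = j.1 ∨ j.1 + 2 = i.1)) := by
                omega
              simp [hd1, hd2, hd3, h1, h2]
            · simp [hjp, h1, h2]
      rw [Finset.sum_congr rfl (fun j _ => hptw j)]
      rw [Finset.sum_add_distrib, Finset.sum_ite_eq' Finset.univ j1,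
        Finset.sum_ite_eq' Finset.univ j2]
      simp [hxdef, ho', pow_succ]
  refine ⟨?_, ?_⟩
  · intro h
    have h0 : (0 : ℕ) < 2 * n + 1 := by omega
    have := congrFun h ⟨0, h0⟩
    rw [hxdef] at this
    simp at this
  · rw [hA, hB, key, key, smul_smul, div_mul_cancel₀ _ hβ3]
end

section
/- Let A = G^(α), B = G^(β) be (2n+1)×(2n+1) corner-overlapped block-diagonal matrices with B invertible. For each j = 1,…,n, the two roots λ of the quadratic â λ² + b̂ λ + ĉ = 0, where â = β_0β_3 - 2β_1² + 2(β_2β_3 - β_1²)cos(jπh), b̂ = 4α_1β_1 - β_0α_3 - α_0β_3 - 2(β_2α_3 - 2α_1β_1 + α_2β_3)cos(jπh), ĉ = α_0α_3 - 2α_1² + 2(α_2α_3 - α_1²)cos(jπh), h = 1/(n+1), are generalized eigenvalues of A x = λ B x, with eigenvector given by x_{2k} = sin(jπkh) and x_{2k+1} = ((α_1 - λβ_1)/(λβ_3 - α_3))(x_{2k} + x_{2k+2}) (with x_0 = x_{2n+2} = 0), provided λβ_3 - α_3 ≠ 0. -/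
open Matrix Real

lemma sum_ite_eq_mul {N : ℕ} (t : ℕ) (c : ℂ) (X : ℕ → ℂ) (hX : ∀ m, N ≤ m → X m = 0) :
    (∑ m ∈ Finset.range N, if m = t then c * X m else 0) = c * X t := by
  rw [Finset.sum_ite_eq' (Finset.range N) t (fun m => c * X m)]
  by_cases ht : t < N
  · simp [Finset.mem_range, ht]
  · simp [Finset.mem_range, ht, hX t (le_of_not_gt ht)]

lemma sin_rec (p : ℝ) (k : ℕ) :
    Real.sin (k * p) + Real.sin (((k : ℝ) + 2) * p) = 2 * Real.cos p * Real.sin (((k : ℝ) + 1) * p) := by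
  have h1 : (k : ℝ) * p = ((k : ℝ) + 1) * p - p := by ring
  have h2 : ((k : ℝ) + 2) * p = ((k : ℝ) + 1) * p + p := by ring
  rw [h1, h2, Real.sin_add, Real.sin_sub]; ring

set_option maxHeartbeats 1000000 in
theorem stmt8 (n : ℕ) (hn : 1 ≤ n)
    (α β : ℕ → ℂ)
    (G : (ℕ → ℂ) → Matrix (Fin (2 * n + 1)) (Fin (2 * n + 1)) ℂ)
    (hG : ∀ (ξ : ℕ → ℂ) (i j : Fin (2 * n + 1)), G ξ i j =
      if i = j then (if i.1 % 2 = 0 then ξ 3 else ξ 0)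
      else if i.1 + 1 = j.1 ∨ j.1 + 1 = i.1 then ξ 1
      else if i.1 % 2 = 1 ∧ j.1 % 2 = 1 ∧ (i.1 + 2 = j.1 ∨ j.1 + 2 = i.1) then ξ 2
      else 0)
    (A B : Matrix (Fin (2 * n + 1)) (Fin (2 * n + 1)) ℂ)
    (hA : A = G α) (hB : B = G β) (hBinv : IsUnit B)
    (h : ℝ) (hh : h = 1 / (n + 1))
    (j : Fin n) (lam : ℂ)
    (hroot :
      (β 0 * β 3 - 2 * β 1 ^ 2 + 2 * (β 2 * β 3 - β 1 ^ 2)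
          * Real.cos ((j.1 + 1) * π * h)) * lam ^ 2 +
      (4 * α 1 * β 1 - β 0 * α 3 - α 0 * β 3 -
        2 * (β 2 * α 3 - 2 * α 1 * β 1 + α 2 * β 3)
          * Real.cos ((j.1 + 1) * π * h)) * lam +
      (α 0 * α 3 - 2 * α 1 ^ 2 + 2 * (α 2 * α 3 - α 1 ^ 2)
          * Real.cos ((j.1 + 1) * π * h)) = 0)
    (hden : lam * β 3 - α 3 ≠ 0) :
    let s : ℕ → ℂ := fun k => (Real.sin ((j.1 + 1) * π * k * h) : ℝ)
    let x : Fin (2 * n + 1) → ℂ := fun i =>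
      if i.1 % 2 = 1 then s ((i.1 + 1) / 2)
      else (α 1 - lam * β 1) / (lam * β 3 - α 3) * (s (i.1 / 2) + s (i.1 / 2 + 1))
    x ≠ 0 ∧ A.mulVec x = lam • B.mulVec x := by
  set r : ℂ := (α 1 - lam * β 1) / (lam * β 3 - α 3) with hr
  set c : ℝ := Real.cos (((j.1 : ℝ) + 1) * π * h) with hc
  intro s x
  have hNR : ((n:ℝ)+1) ≠ 0 := by positivity
  have hπ := Real.pi_pos
  have hhpos : 0 < h := by rw [hh]; positivity
  -- algebraic identities
  have hrdiv : r * (lam * β 3 - α 3) = α 1 - lam * β 1 := by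
    rw [hr]; exact div_mul_cancel₀ _ hden
  have E1 : (α 3 - lam * β 3) * r + (α 1 - lam * β 1) = 0 := by
    linear_combination -hrdiv
  have E2 : (α 0 - lam * β 0) + 2 * (α 1 - lam * β 1) * r * (1 + (c:ℂ))
      + 2 * (α 2 - lam * β 2) * (c:ℂ) = 0 := by
    have h2 : ((α 0 - lam * β 0) + 2 * (α 1 - lam * β 1) * r * (1 + (c:ℂ))
        + 2 * (α 2 - lam * β 2) * (c:ℂ)) * (lam * β 3 - α 3) = 0 := by
      linear_combination (2 * (α 1 - lam * β 1) * (1 + (c:ℂ))) * hrdiv - hroot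
    rcases mul_eq_zero.mp h2 with h' | h'
    · exact h'
    · exact absurd h' hden
  -- trig facts
  have hs0 : s 0 = 0 := by simp [s]
  have hsn : s (n+1) = 0 := by
    simp only [s]
    norm_cast
    push_cast
    rw [show ((j.1:ℝ)+1)*π*((n:ℝ)+1)*h = ((j.1:ℝ)+1)*(((n:ℝ)+1)*h)*π by ring, hh]
    rw [show ((n:ℝ)+1)*(1/((n:ℝ)+1)) = 1 by field_simp, mul_one]
    have hz := Real.sin_nat_mul_pi (j.1+1)
    push_cast at hz
    exact hz
  have hrec : ∀ k : ℕ, s k + s (k+2) = 2 * (c:ℂ) * s (k+1) := by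
    intro k
    simp only [s, hc]
    norm_cast
    push_cast
    rw [show ((j.1:ℝ)+1)*π*(k:ℝ)*h = (k:ℝ)*(((j.1:ℝ)+1)*π*h) by ring,
        show ((j.1:ℝ)+1)*π*((k:ℝ)+2)*h = ((k:ℝ)+2)*(((j.1:ℝ)+1)*π*h) by ring,
        show ((j.1:ℝ)+1)*π*((k:ℝ)+1)*h = ((k:ℝ)+1)*(((j.1:ℝ)+1)*π*h) by ring]
    exact sin_rec (((j.1:ℝ)+1)*π*h) k
  -- the extended vector
  set X : ℕ → ℂ := fun m => if m < 2*n+1 then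
      (if m % 2 = 1 then s ((m+1)/2) else r * (s (m/2) + s (m/2+1))) else 0 with hX
  have hxX : ∀ k : Fin (2*n+1), x k = X k.1 := by
    intro k
    simp only [x, X]
    rw [if_pos k.isLt]
  have hX0 : ∀ m, 2*n+1 ≤ m → X m = 0 := by
    intro m hm; simp only [X]; rw [if_neg (by omega)]
  have hXo : ∀ k, k ≤ n → X (2*k+1) = s (k+1) := by
    intro k hk
    simp only [X]
    by_cases hkn : 2*k+1 < 2*n+1
    · rw [if_pos hkn, if_pos (by omega)]
      congr 1
      omega
    · rw [if_neg hkn]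
      have hkeq : k = n := by omega
      subst hkeq
      exact hsn.symm
  have hXe : ∀ m, m ≤ n → X (2*m) = r * (s m + s (m+1)) := by
    intro m hm
    simp only [X]
    rw [if_pos (by omega), if_neg (by omega), show 2*m/2 = m by omega]
  -- the key row computation
  have key : ∀ i : Fin (2*n+1), (∑ k : Fin (2*n+1), (A i k - lam * B i k) * x k) = 0 := by
    intro i
    have hABik : ∀ k : Fin (2*n+1), (A i k - lam * B i k) * x k =
        (if i = k then (if i.1 % 2 = 0 then α 3 - lam * β 3 else α 0 - lam * β 0)
          else if i.1 + 1 = k.1 ∨ k.1 + 1 = i.1 then α 1 - lam * β 1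
          else if i.1 % 2 = 1 ∧ k.1 % 2 = 1 ∧ (i.1 + 2 = k.1 ∨ k.1 + 2 = i.1) then α 2 - lam * β 2
          else 0) * X k.1 := by
      intro k
      rw [hA, hB, hG, hG, hxX k]
      split_ifs <;> ring
    have hiLt := i.isLt
    rcases Nat.even_or_odd i.1 with ⟨m, hm⟩ | ⟨m, hm⟩
    · -- even row, i.1 = m + m
      have hmn : m ≤ n := by omega
      by_cases hm0 : m = 0
      · subst hm0
        have hpt : ∀ k : Fin (2*n+1), (A i k - lam * B i k) * x k =
            (if k.1 = 0 then (α 3 - lam * β 3) * X k.1 else 0)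
            + (if k.1 = 1 then (α 1 - lam * β 1) * X k.1 else 0) := by
          intro k
          rw [hABik k]
          simp only [Fin.ext_iff]
          split_ifs <;> first | (exfalso; omega) | ring1
        rw [show (∑ k : Fin (2*n+1), (A i k - lam * B i k) * x k)
            = ∑ mm ∈ Finset.range (2*n+1),
              ((if mm = 0 then (α 3 - lam * β 3) * X mm else 0)
              + (if mm = 1 then (α 1 - lam * β 1) * X mm else 0)) from by
          rw [← Fin.sum_univ_eq_sum_range (fun mm =>
              (if mm = 0 then (α 3 - lam * β 3) * X mm else 0)
              + (if mm = 1 then (α 1 - lam * β 1) * X mm else 0)) (2*n+1)]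
          exact Finset.sum_congr rfl fun k _ => hpt k]
        rw [Finset.sum_add_distrib, sum_ite_eq_mul _ _ _ hX0, sum_ite_eq_mul _ _ _ hX0]
        have e0 : X 0 = r * (s 0 + s 1) := by
          have := hXe 0 (by omega); simpa using this
        have e1 : X 1 = s 1 := by
          have := hXo 0 (by omega); simpa using this
        rw [e0, e1]
        linear_combination (s 0 + s 1) * E1 - (α 1 - lam * β 1) * hs0
      · -- m ≥ 1
        have hpt : ∀ k : Fin (2*n+1), (A i k - lam * B i k) * x k =
            (if k.1 = 2*m then (α 3 - lam * β 3) * X k.1 else 0)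
            + (if k.1 = 2*m+1 then (α 1 - lam * β 1) * X k.1 else 0)
            + (if k.1 = 2*m-1 then (α 1 - lam * β 1) * X k.1 else 0) := by
          intro k
          rw [hABik k]
          simp only [Fin.ext_iff]
          split_ifs <;> first | (exfalso; omega) | ring1
        rw [show (∑ k : Fin (2*n+1), (A i k - lam * B i k) * x k)
            = ∑ mm ∈ Finset.range (2*n+1),
              ((if mm = 2*m then (α 3 - lam * β 3) * X mm else 0)
              + (if mm = 2*m+1 then (α 1 - lam * β 1) * X mm else 0)
              + (if mm = 2*m-1 then (α 1 - lam * β 1) * X mm else 0)) from by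
          rw [← Fin.sum_univ_eq_sum_range (fun mm =>
              (if mm = 2*m then (α 3 - lam * β 3) * X mm else 0)
              + (if mm = 2*m+1 then (α 1 - lam * β 1) * X mm else 0)
              + (if mm = 2*m-1 then (α 1 - lam * β 1) * X mm else 0)) (2*n+1)]
          exact Finset.sum_congr rfl fun k _ => hpt k]
        rw [Finset.sum_add_distrib, Finset.sum_add_distrib,
            sum_ite_eq_mul _ _ _ hX0, sum_ite_eq_mul _ _ _ hX0, sum_ite_eq_mul _ _ _ hX0]
        have e0 : X (2*m) = r * (s m + s (m+1)) := hXe m hmn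
        have e1 : X (2*m+1) = s (m+1) := hXo m hmn
        have e2 : X (2*m-1) = s m := by
          rw [show 2*m-1 = 2*(m-1)+1 by omega, hXo (m-1) (by omega),
              show m-1+1 = m by omega]
        rw [e0, e1, e2]
        linear_combination (s m + s (m+1)) * E1
    · -- odd row, i.1 = 2*m+1
      have hmn : m < n := by omega
      by_cases hm0 : m = 0
      · subst hm0
        have hpt : ∀ k : Fin (2*n+1), (A i k - lam * B i k) * x k =
            (if k.1 = 1 then (α 0 - lam * β 0) * X k.1 else 0)
            + (if k.1 = 2 then (α 1 - lam * β 1) * X k.1 else 0)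
            + (if k.1 = 0 then (α 1 - lam * β 1) * X k.1 else 0)
            + (if k.1 = 3 then (α 2 - lam * β 2) * X k.1 else 0) := by
          intro k
          rw [hABik k]
          simp only [Fin.ext_iff]
          split_ifs <;> first | (exfalso; omega) | ring1
        rw [show (∑ k : Fin (2*n+1), (A i k - lam * B i k) * x k)
            = ∑ mm ∈ Finset.range (2*n+1),
              ((if mm = 1 then (α 0 - lam * β 0) * X mm else 0)
              + (if mm = 2 then (α 1 - lam * β 1) * X mm else 0)
              + (if mm = 0 then (α 1 - lam * β 1) * X mm else 0)
              + (if mm = 3 then (α 2 - lam * β 2) * X mm else 0)) from by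
          rw [← Fin.sum_univ_eq_sum_range (fun mm =>
              (if mm = 1 then (α 0 - lam * β 0) * X mm else 0)
              + (if mm = 2 then (α 1 - lam * β 1) * X mm else 0)
              + (if mm = 0 then (α 1 - lam * β 1) * X mm else 0)
              + (if mm = 3 then (α 2 - lam * β 2) * X mm else 0)) (2*n+1)]
          exact Finset.sum_congr rfl fun k _ => hpt k]
        rw [Finset.sum_add_distrib, Finset.sum_add_distrib, Finset.sum_add_distrib,
            sum_ite_eq_mul _ _ _ hX0, sum_ite_eq_mul _ _ _ hX0,
            sum_ite_eq_mul _ _ _ hX0, sum_ite_eq_mul _ _ _ hX0]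
        have e0 : X 1 = s 1 := by have := hXo 0 (by omega); simpa using this
        have e1 : X 2 = r * (s 1 + s 2) := by have := hXe 1 (by omega); simpa using this
        have e2 : X 0 = r * (s 0 + s 1) := by have := hXe 0 (by omega); simpa using this
        have e3 : X 3 = s 2 := by have := hXo 1 (by omega); simpa using this
        rw [e0, e1, e2, e3]
        linear_combination (s 1) * E2 + ((α 1 - lam * β 1) * r + (α 2 - lam * β 2)) * hrec 0
          - (α 2 - lam * β 2) * hs0
      · -- m ≥ 1
        have hpt : ∀ k : Fin (2*n+1), (A i k - lam * B i k) * x k =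
            (if k.1 = 2*m+1 then (α 0 - lam * β 0) * X k.1 else 0)
            + (if k.1 = 2*m+2 then (α 1 - lam * β 1) * X k.1 else 0)
            + (if k.1 = 2*m then (α 1 - lam * β 1) * X k.1 else 0)
            + (if k.1 = 2*m+3 then (α 2 - lam * β 2) * X k.1 else 0)
            + (if k.1 = 2*m-1 then (α 2 - lam * β 2) * X k.1 else 0) := by
          intro k
          rw [hABik k]
          simp only [Fin.ext_iff]
          split_ifs <;> first | (exfalso; omega) | ring1
        rw [show (∑ k : Fin (2*n+1), (A i k - lam * B i k) * x k)
            = ∑ mm ∈ Finset.range (2*n+1),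
              ((if mm = 2*m+1 then (α 0 - lam * β 0) * X mm else 0)
              + (if mm = 2*m+2 then (α 1 - lam * β 1) * X mm else 0)
              + (if mm = 2*m then (α 1 - lam * β 1) * X mm else 0)
              + (if mm = 2*m+3 then (α 2 - lam * β 2) * X mm else 0)
              + (if mm = 2*m-1 then (α 2 - lam * β 2) * X mm else 0)) from by
          rw [← Fin.sum_univ_eq_sum_range (fun mm =>
              (if mm = 2*m+1 then (α 0 - lam * β 0) * X mm else 0)
              + (if mm = 2*m+2 then (α 1 - lam * β 1) * X mm else 0)
              + (if mm = 2*m then (α 1 - lam * β 1) * X mm else 0)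
              + (if mm = 2*m+3 then (α 2 - lam * β 2) * X mm else 0)
              + (if mm = 2*m-1 then (α 2 - lam * β 2) * X mm else 0)) (2*n+1)]
          exact Finset.sum_congr rfl fun k _ => hpt k]
        rw [Finset.sum_add_distrib, Finset.sum_add_distrib, Finset.sum_add_distrib,
            Finset.sum_add_distrib,
            sum_ite_eq_mul _ _ _ hX0, sum_ite_eq_mul _ _ _ hX0, sum_ite_eq_mul _ _ _ hX0,
            sum_ite_eq_mul _ _ _ hX0, sum_ite_eq_mul _ _ _ hX0]
        have e0 : X (2*m+1) = s (m+1) := hXo m (by omega)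
        have e1 : X (2*m+2) = r * (s (m+1) + s (m+2)) := by
          rw [show 2*m+2 = 2*(m+1) by ring, hXe (m+1) (by omega)]
        have e2 : X (2*m) = r * (s m + s (m+1)) := hXe m (by omega)
        have e3 : X (2*m+3) = s (m+2) := by
          rw [show 2*m+3 = 2*(m+1)+1 by ring, hXo (m+1) (by omega)]
        have e4 : X (2*m-1) = s m := by
          rw [show 2*m-1 = 2*(m-1)+1 by omega, hXo (m-1) (by omega),
              show m-1+1 = m by omega]
        rw [e0, e1, e2, e3, e4]
        linear_combination (s (m+1)) * E2
          + ((α 1 - lam * β 1) * r + (α 2 - lam * β 2)) * hrec m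
  constructor
  · -- x ≠ 0
    have hone : (1:ℕ) < 2*n+1 := by omega
    have hxone : x ⟨1, hone⟩ = s 1 := by
      simp only [x]
      norm_num
    have hs1 : s 1 ≠ 0 := by
      simp only [s]
      norm_cast
      apply ne_of_gt
      apply Real.sin_pos_of_pos_of_lt_pi
      · push_cast
        have h0 : (0:ℝ) < (j.1:ℝ)+1 := by positivity
        rw [mul_one]
        exact mul_pos (mul_pos h0 hπ) hhpos
      · push_cast
        rw [hh]
        have hj : ((j.1:ℝ)+1) < (n:ℝ)+1 := by
          have := j.isLt
          have : ((j.1:ℝ)) < (n:ℝ) := by exact_mod_cast this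
          linarith
        rw [mul_one, mul_one_div, div_lt_iff₀ (by positivity)]
        nlinarith
    intro heq
    apply hs1
    rw [← hxone, heq]
    rfl
  · funext i
    have hk := key i
    simp only [Matrix.mulVec, dotProduct, Pi.smul_apply, smul_eq_mul]
    rw [Finset.mul_sum, ← sub_eq_zero, ← Finset.sum_sub_distrib, ← hk]
    exact Finset.sum_congr rfl fun k _ => by ring
end

section
/- For p-th order banded Toeplitz-minus-Hankel coefficient matrices A_s = T^(α^(s),m) - H^(α^(s),m), s = 0,…,q, the polynomial eigenvalue problem (∑_{s=0}^q λ^s A_s) x = 0 has, for each j = 1,…,n, the eigenvector x_j with entries x_{j,k} = sin(jπkh) (h = 1/(n+1)) associated with any root λ of the scalar polynomial ∑_{s=0}^q λ^s (α_0^(s) + 2∑_{l=1}^m α_l^(s) cos(l j π h)) = 0. -/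
/-!
Extend the eigenvector to `g t = sin (θ t)` on all of `ℤ`, where `θ = (j + 1) π / (n + 1)`.
Since `g` is odd and antisymmetric about `n + 1`, the Hankel part of `T - H` is exactly what
completes the truncated Toeplitz convolution: the entries of a row of `T` that would reach outside
`1..n` are reflected back by `H` with a minus sign. Hence row `s` of `(T - H) x` is
`ξ₀ g s + ∑ₗ ξₗ (g (s - l) + g (s + l)) = (ξ₀ + 2 ∑ₗ ξₗ cos (l θ)) g s`, every coefficient matrix
acts on `x` as a scalar, and the polynomial condition on `λ` makes the combination vanish.
-/

open Matrix Real Finset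

theorem sum_ite_cast_add_one_eq {M : Type*} [AddCommMonoid M] (n : ℕ) (f : ℤ → M) (a : ℤ) :
    ∑ k : Fin n, (if (k : ℤ) + 1 = a then f ((k : ℤ) + 1) else 0) =
      if 1 ≤ a ∧ a ≤ n then f a else 0 := by
  split_ifs with ha
  · have hk₀ : (((a - 1).toNat : ℕ) : ℤ) + 1 = a := by omega
    rw [Fintype.sum_eq_single ⟨(a - 1).toNat, by omega⟩
      fun k hk => if_neg fun h => hk (Fin.ext (by dsimp only; omega)), if_pos hk₀, hk₀]
  · exact Fintype.sum_eq_zero _ fun k => if_neg (by omega)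

theorem ite_sub_ite_of_apply_eq_neg {K : Type*} [Field K] [CharZero K] {g : ℤ → K} {a b : ℤ}
    (hab : g b = -g a)
    (p : ℤ → Prop) [DecidablePred p] (hcover : p a ∨ a = b ∨ p b) (hdisj : ¬(p a ∧ p b)) :
    ((if p a then g a else 0) - if p b then g b else 0) = g a := by
  split_ifs with ha hb hb
  · exact absurd ⟨ha, hb⟩ hdisj
  · ring
  · rw [hab]; ring
  · obtain h | rfl | h := hcover
    · contradiction
    · linear_combination -hab / 2
    · contradiction

theorem sin_vector_ne_zero {n : ℕ} (hn : 0 < n) {θ : ℝ} (hpos : 0 < θ) (hlt : θ < π) :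
    (fun k : Fin n => (Real.sin (θ * (k + 1)) : ℂ)) ≠ 0 := by
  intro h
  have h0 := congrFun h ⟨0, hn⟩
  simp only [CharP.cast_eq_zero, zero_add, mul_one, Pi.zero_apply,
    Complex.ofReal_eq_zero] at h0
  exact (Real.sin_pos_of_pos_of_lt_pi hpos hlt).ne' h0

namespace ToeplitzMinusHankel

def matrix (n m : ℕ) (ξ : ℕ → ℂ) : Matrix (Fin n) (Fin n) ℂ :=
  of fun i k =>
    (if max i.1 k.1 - min i.1 k.1 ≤ m then ξ (max i.1 k.1 - min i.1 k.1) else 0) -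
      (if i.1 + k.1 + 2 ≤ m then ξ (i.1 + k.1 + 2)
        else if 2 * n - (i.1 + k.1) ≤ m then ξ (2 * n - (i.1 + k.1)) else 0)

def coeff (n i k l : ℕ) : ℂ :=
  (if max i k - min i k = l then 1 else 0) - (if i + k + 2 = l then 1 else 0) -
    (if 2 * n - (i + k) = l then 1 else 0)

theorem matrix_apply_eq_sum {n m : ℕ} (hm : m < n) (ξ : ℕ → ℂ) (i k : Fin n) :
    matrix n m ξ i k = ∑ l ∈ Icc 0 m, ξ l * coeff n i k l := by
  have := i.2; have := k.2
  simp only [matrix, coeff, of_apply, mul_sub, mul_ite, mul_one, mul_zero, sum_sub_distrib,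
    sum_ite_eq, mem_Icc, zero_le, true_and]
  split_ifs <;> first | omega | ring

theorem coeff_zero {n i k : ℕ} (hi : i < n) (hk : k < n) :
    coeff n i k 0 = if i = k then 1 else 0 := by
  have : i + k + 2 ≠ 0 := by omega
  have : 2 * n - (i + k) ≠ 0 := by omega
  have : max i k - min i k = 0 ↔ i = k := by omega
  simp [coeff, *]

theorem sum_coeff_zero_mul {n i : ℕ} (g : ℤ → ℂ) (hi : i < n) :
    ∑ k : Fin n, coeff n i k 0 * g (k + 1) = g (i + 1) := by
  simp only [coeff_zero hi (Fin.is_lt _), ite_mul, one_mul, zero_mul]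
  rw [Fintype.sum_eq_single ⟨i, hi⟩ fun k hk => if_neg fun h => hk (Fin.ext h.symm), if_pos rfl]

/-- In the one-based integer indices `s = i + 1`, `t = k + 1`, the band of `T` picks `t = s ∓ l`,
and the two corners of `H` pick the mirror images of these about `0` and about `n + 1`. -/
theorem coeff_eq_of_pos {n i k l : ℕ} (hi : i < n) (hk : k < n) (hl : 1 ≤ l) :
    coeff n i k l =
      (if (k : ℤ) + 1 = i + 1 - l then 1 else 0) + (if (k : ℤ) + 1 = i + 1 + l then 1 else 0) -
        (if (k : ℤ) + 1 = l - (i + 1) then 1 else 0) -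
        (if (k : ℤ) + 1 = 2 * (n + 1) - (i + 1 + l) then 1 else 0) := by
  simp only [coeff]
  split_ifs <;> first | omega | ring

theorem sum_coeff_mul {n i l : ℕ} {g : ℤ → ℂ} (hodd : ∀ t, g (-t) = -g t)
    (hrefl : ∀ t, g (2 * (n + 1) - t) = -g t) (hi : i < n) (hl : 1 ≤ l) (hln : l ≤ n) :
    ∑ k : Fin n, coeff n i k l * g (k + 1) = g (i + 1 - l) + g (i + 1 + l) := by
  simp only [coeff_eq_of_pos hi (Fin.is_lt _) hl, add_mul, sub_mul, ite_mul, one_mul, zero_mul,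
    sum_add_distrib, sum_sub_distrib, sum_ite_cast_add_one_eq]
  have hleft := ite_sub_ite_of_apply_eq_neg (g := g) (a := i + 1 - l) (b := l - (i + 1))
    (by rw [← neg_sub, hodd]) (fun t : ℤ => 1 ≤ t ∧ t ≤ n) (by omega) (by omega)
  have hright := ite_sub_ite_of_apply_eq_neg (g := g) (a := i + 1 + l)
    (b := 2 * (n + 1) - (i + 1 + l)) (hrefl _) (fun t : ℤ => 1 ≤ t ∧ t ≤ n) (by omega) (by omega)
  linear_combination hleft + hright

theorem matrix_mulVec_of_antisymm {n m : ℕ} (hm : m < n) (ξ : ℕ → ℂ) {g : ℤ → ℂ} (c : ℕ → ℂ)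
    (hodd : ∀ t, g (-t) = -g t) (hrefl : ∀ t, g (2 * (n + 1) - t) = -g t)
    (hshift : ∀ (a : ℤ) (l : ℕ), g (a - l) + g (a + l) = c l * g a) :
    matrix n m ξ *ᵥ (fun k : Fin n => g (k + 1)) =
      (ξ 0 + ∑ l ∈ Icc 1 m, ξ l * c l) • fun k : Fin n => g (k + 1) := by
  ext i
  simp only [mulVec, dotProduct, matrix_apply_eq_sum hm, sum_mul, Pi.smul_apply, smul_eq_mul]
  rw [sum_comm]
  simp only [mul_assoc, ← mul_sum]
  rw [← add_sum_Ioc_eq_sum_Icc (Nat.zero_le m), ← Icc_add_one_left_eq_Ioc, zero_add,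
    sum_coeff_zero_mul g i.2, add_mul, sum_mul]
  congr 1
  refine sum_congr rfl fun l hl => ?_
  rw [mem_Icc] at hl
  rw [sum_coeff_mul hodd hrefl i.2 hl.1 (by omega), hshift, mul_assoc]

theorem matrix_mulVec_sin {n m : ℕ} (hm : m < n) (ξ : ℕ → ℂ) {θ : ℝ} (p : ℕ)
    (hθ : θ * (n + 1) = p * π) :
    matrix n m ξ *ᵥ (fun k : Fin n => (Real.sin (θ * (k + 1)) : ℂ)) =
      (ξ 0 + 2 * ∑ l ∈ Icc 1 m, ξ l * Real.cos (l * θ)) •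
        fun k : Fin n => (Real.sin (θ * (k + 1)) : ℂ) := by
  set g : ℤ → ℂ := fun t => (Real.sin (θ * t) : ℂ)
  have hodd : ∀ t, g (-t) = -g t := by
    intro t; simp only [g, Int.cast_neg, mul_neg, Real.sin_neg, Complex.ofReal_neg]
  have hrefl : ∀ t, g (2 * (n + 1) - t) = -g t := by
    intro t
    have : θ * ((2 * (n + 1) - t : ℤ) : ℝ) = p * (2 * π) - θ * t := by
      push_cast; linear_combination 2 * hθ
    simp only [g, this, Real.sin_nat_mul_two_pi_sub, Complex.ofReal_neg]
  have hshift : ∀ (a : ℤ) (l : ℕ), g (a - l) + g (a + l) = 2 * Real.cos (l * θ) * g a := by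
    intro a l
    have key : Real.sin (θ * (a - l)) + Real.sin (θ * (a + l)) =
        2 * Real.cos (l * θ) * Real.sin (θ * a) := by
      rw [mul_sub, mul_add, Real.sin_sub, Real.sin_add, mul_comm (l : ℝ)]; ring
    simp only [g, Int.cast_sub, Int.cast_add, Int.cast_natCast]
    exact_mod_cast key
  have hvec : (fun k : Fin n => (Real.sin (θ * (k + 1)) : ℂ)) = fun k : Fin n => g (k + 1) := by
    funext k; simp only [g]; push_cast; rfl
  rw [hvec, matrix_mulVec_of_antisymm hm ξ _ hodd hrefl hshift, mul_sum]
  simp only [mul_left_comm (2 : ℂ)]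

end ToeplitzMinusHankel

theorem stmt9_general (n m q : ℕ) (hm2 : m ≤ n - 1)
    (α : ℕ → ℕ → ℂ)
    (T H : (ℕ → ℂ) → Matrix (Fin n) (Fin n) ℂ)
    (hT : ∀ (ξ : ℕ → ℂ) (i j : Fin n), T ξ i j =
      if max i.1 j.1 - min i.1 j.1 ≤ m then ξ (max i.1 j.1 - min i.1 j.1) else 0)
    (hH : ∀ (ξ : ℕ → ℂ) (i j : Fin n), H ξ i j =
      if i.1 + j.1 + 2 ≤ m then ξ (i.1 + j.1 + 2)
      else if 2 * n - (i.1 + j.1) ≤ m then ξ (2 * n - (i.1 + j.1)) else 0)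
    (A : ℕ → Matrix (Fin n) (Fin n) ℂ)
    (hA : ∀ s, s ≤ q → A s = T (α s) - H (α s))
    (h : ℝ) (hh : h = 1 / (n + 1)) :
    ∀ j : Fin n, ∀ lam : ℂ,
      (∑ s ∈ Finset.range (q + 1), lam ^ s *
        (α s 0 + 2 * ∑ l ∈ Finset.Icc 1 m, α s l * Real.cos (l * (j.1 + 1) * π * h))) = 0 →
      let x : Fin n → ℂ := fun k => (Real.sin ((j.1 + 1) * π * (k.1 + 1) * h) : ℝ)
      x ≠ 0 ∧ (∑ s ∈ Finset.range (q + 1), lam ^ s • (A s)).mulVec x = 0 := by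
  intro j lam hlam x
  have hm : m < n := by have := j.isLt; omega
  have hθ : (j.1 + 1) * π * h = (j.1 + 1) / (n + 1) * π := by rw [hh]; ring
  have hx : x = fun k : Fin n => (Real.sin ((j.1 + 1) * π * h * (k + 1)) : ℂ) := by
    funext k; simp only [x]; ring_nf
  have heig : ∀ s ≤ q, A s *ᵥ x =
      (α s 0 + 2 * ∑ l ∈ Icc 1 m, α s l * Real.cos (l * (j.1 + 1) * π * h)) • x := by
    intro s hs
    have hTH : T (α s) - H (α s) = ToeplitzMinusHankel.matrix n m (α s) := by
      ext i k; rw [Matrix.sub_apply, hT, hH]; rfl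
    have hθn : (j.1 + 1) * π * h * (n + 1) = (j.1 + 1 : ℕ) * π := by
      rw [hθ, Nat.cast_add_one]; field_simp
    rw [hA s hs, hTH, hx, ToeplitzMinusHankel.matrix_mulVec_sin hm _ _ hθn]
    simp only [← mul_assoc]
  refine ⟨?_, ?_⟩
  · rw [hx, hθ]
    refine sin_vector_ne_zero j.pos (by positivity) (mul_lt_of_lt_one_left pi_pos ?_)
    rw [div_lt_one (by positivity)]
    exact_mod_cast Nat.succ_lt_succ j.2
  · rw [sum_mulVec]
    calc ∑ s ∈ range (q + 1), (lam ^ s • A s) *ᵥ x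
        = ∑ s ∈ range (q + 1), (lam ^ s *
            (α s 0 + 2 * ∑ l ∈ Icc 1 m, α s l * Real.cos (l * (j.1 + 1) * π * h))) • x :=
          sum_congr rfl fun s hs => by
            rw [smul_mulVec, heig s (by rw [mem_range] at hs; omega), smul_smul]
      _ = 0 := by rw [← sum_smul, hlam, zero_smul]

theorem stmt9 (n m q : ℕ) (hn : 2 ≤ n) (hm1 : 1 ≤ m) (hm2 : m ≤ n - 1) (hq : 1 ≤ q)
    (α : ℕ → ℕ → ℂ)
    (T H : (ℕ → ℂ) → Matrix (Fin n) (Fin n) ℂ)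
    (hT : ∀ (ξ : ℕ → ℂ) (i j : Fin n), T ξ i j =
      if max i.1 j.1 - min i.1 j.1 ≤ m then ξ (max i.1 j.1 - min i.1 j.1) else 0)
    (hH : ∀ (ξ : ℕ → ℂ) (i j : Fin n), H ξ i j =
      if i.1 + j.1 + 2 ≤ m then ξ (i.1 + j.1 + 2)
      else if 2 * n - (i.1 + j.1) ≤ m then ξ (2 * n - (i.1 + j.1)) else 0)
    (A : ℕ → Matrix (Fin n) (Fin n) ℂ)
    (hA : ∀ s, s ≤ q → A s = T (α s) - H (α s))
    (h : ℝ) (hh : h = 1 / (n + 1)) :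
    ∀ j : Fin n, ∀ lam : ℂ,
      (∑ s ∈ Finset.range (q + 1), lam ^ s *
        (α s 0 + 2 * ∑ l ∈ Finset.Icc 1 m, α s l * Real.cos (l * (j.1 + 1) * π * h))) = 0 →
      let x : Fin n → ℂ := fun k => (Real.sin ((j.1 + 1) * π * (k.1 + 1) * h) : ℝ)
      x ≠ 0 ∧ (∑ s ∈ Finset.range (q + 1), lam ^ s • (A s)).mulVec x = 0 :=
  stmt9_general n m q hm2 α T H hT hH A hA h hh
end

section
/- Trigonometric identity: for n ≥ 2 and k = 1,…,n, (2/(n+1)) sin²(kπ/(n+1)) = ∏_{j=1}^{n-1} (cos(kπ/(n+1)) - cos(jπ/n)) / ∏_{j=1, j≠k}^{n} (cos(kπ/(n+1)) - cos(jπ/(n+1))). -/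
/-!
Both products are values of the Chebyshev polynomials of the second kind, which factor as
`U_n = 2^n ∏_{j=1}^n (X - cos (jπ/(n+1)))`. Put `θ = kπ/(n+1)`. The numerator is
`U_{n-1}(cos θ) / 2^(n-1) = sin (nθ) / (2^(n-1) sin θ) = (-1)^(k+1) / 2^(n-1)`, because `nθ = kπ - θ`.
The denominator is `U_n'(cos θ) / 2^n`, and since `cos θ` is a root of `U_n`, the identity
`(n+1) T_{n+1} = X U_n - (1 - X^2) U_n'` gives `sin² θ · U_n'(cos θ) = (n+1) (-1)^(k+1)`.
-/

open Real Finset Polynomial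

theorem Polynomial.eval_derivative_prod_X_sub_C_of_mem {ι R : Type*} [CommRing R] [DecidableEq ι]
    {s : Finset ι} {f : ι → R} {k : ι} (hk : k ∈ s) :
    (derivative (∏ j ∈ s, (X - C (f j)))).eval (f k) = ∏ j ∈ s.erase k, (f k - f j) := by
  rw [← mul_prod_erase s _ hk, derivative_mul]
  simp [eval_prod]

theorem Polynomial.Chebyshev.U_real_eq_prod (n : ℕ) :
    U ℝ n = Polynomial.C (2 ^ n) * ∏ j ∈ Icc 1 n, (X - Polynomial.C (cos (j * π / (n + 1)))) := by
  have hinj := (range n).nodup_map_iff_injOn.mp (roots_U_real_nodup n)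
  have hcard : Multiset.card (U ℝ n).roots = (U ℝ n).natDegree := by
    rw [roots_U_real, natDegree_U_natCast, card_val, card_image_of_injOn hinj, card_range]
  conv_lhs => rw [← C_leadingCoeff_mul_prod_multiset_X_sub_C hcard]
  rw [leadingCoeff_U_natCast, roots_U_real]
  congr 1
  change ∏ x ∈ _, _ = _
  rw [prod_image hinj, ← Ico_add_one_right_eq_Icc, prod_Ico_eq_prod_range, Nat.add_sub_cancel]
  refine prod_congr rfl fun j _ => ?_
  push_cast
  ring_nf

theorem sin_succ_mul_eq_prod (n : ℕ) (θ : ℝ) :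
    sin ((n + 1) * θ) = 2 ^ n * sin θ * ∏ j ∈ Icc 1 n, (cos θ - cos (j * π / (n + 1))) := by
  have h := Chebyshev.U_real_cos θ n
  rw [Chebyshev.U_real_eq_prod, eval_mul, eval_C, eval_prod] at h
  push_cast at h
  simp only [eval_sub, eval_X, eval_C] at h
  rw [← h]
  ring

theorem sin_sq_mul_eval_derivative_U_real_cos {n : ℕ} {θ : ℝ} (hθ : sin θ ≠ 0)
    (hnθ : sin ((n + 1) * θ) = 0) :
    sin θ ^ 2 * (derivative (Chebyshev.U ℝ n)).eval (cos θ) = -((n + 1) * cos ((n + 1) * θ)) := by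
  have h := congrArg (eval (cos θ)) (Chebyshev.add_one_mul_T_eq_poly_in_U (R := ℝ) n)
  have hU := Chebyshev.U_real_cos θ n
  push_cast at h hU
  simp only [eval_mul, eval_add, eval_sub, eval_pow, eval_X, eval_one, eval_natCast,
    Chebyshev.T_real_cos] at h
  push_cast at h
  rw [hnθ] at hU
  rw [(mul_eq_zero_iff_right hθ).mp hU] at h
  linear_combination h + (derivative (Chebyshev.U ℝ n)).eval (cos θ) * sin_sq_add_cos_sq θ

theorem sin_nat_mul_pi_div_pos {n k : ℕ} (hk1 : 1 ≤ k) (hk2 : k ≤ n) :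
    0 < sin (k * π / (n + 1)) := by
  apply sin_pos_of_pos_of_lt_pi (by positivity)
  rw [div_lt_iff₀ (by positivity)]
  have : (k : ℝ) < n + 1 := by exact_mod_cast Nat.lt_succ_of_le hk2
  nlinarith [pi_pos]

theorem prod_cos_sub_cos_erase {n k : ℕ} (hk1 : 1 ≤ k) (hk2 : k ≤ n) :
    2 ^ n * sin (k * π / (n + 1)) ^ 2 *
        ∏ j ∈ (Icc 1 n).erase k, (cos (k * π / (n + 1)) - cos (j * π / (n + 1))) =
      (n + 1) * (-1) ^ (k + 1) := by
  have hθ : (n + 1) * (k * π / (n + 1)) = k * π := by field_simp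
  have h := sin_sq_mul_eval_derivative_U_real_cos (sin_nat_mul_pi_div_pos hk1 hk2).ne'
    (by rw [hθ, sin_nat_mul_pi])
  rw [Chebyshev.U_real_eq_prod, derivative_mul, derivative_C, zero_mul, zero_add, eval_mul,
    eval_C, eval_derivative_prod_X_sub_C_of_mem (f := fun j : ℕ => cos (j * π / (n + 1)))
    (mem_Icc.mpr ⟨hk1, hk2⟩), hθ, cos_nat_mul_pi] at h
  linear_combination h

theorem prod_cos_sub_cos_pred {n k : ℕ} (hk1 : 1 ≤ k) (hk2 : k ≤ n) :
    2 ^ (n - 1) * ∏ j ∈ Icc 1 (n - 1), (cos (k * π / (n + 1)) - cos (j * π / n)) =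
      (-1) ^ (k + 1) := by
  obtain ⟨m, rfl⟩ : ∃ m, n = m + 1 := ⟨n - 1, by omega⟩
  have hθ : (m + 1) * (k * π / (m + 1 + 1)) = k * π - k * π / (m + 1 + 1) := by
    field_simp
    ring
  have h := sin_succ_mul_eq_prod m (k * π / (m + 1 + 1))
  rw [hθ, sin_nat_mul_pi_sub] at h
  apply mul_right_cancel₀ (sin_nat_mul_pi_div_pos hk1 hk2).ne'
  push_cast
  linear_combination -h

theorem stmt13_general (n k : ℕ) (hk1 : 1 ≤ k) (hk2 : k ≤ n) :
    (2 / (n + 1)) * Real.sin (k * π / (n + 1)) ^ 2 =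
      (∏ j ∈ Finset.Icc 1 (n - 1), (Real.cos (k * π / (n + 1)) - Real.cos (j * π / n))) /
      (∏ j ∈ (Finset.Icc 1 n).erase k,
        (Real.cos (k * π / (n + 1)) - Real.cos (j * π / (n + 1)))) := by
  set D := ∏ j ∈ (Icc 1 n).erase k, (cos (k * π / (n + 1)) - cos (j * π / (n + 1)))
  have hnum := prod_cos_sub_cos_pred hk1 hk2
  have hden : 2 ^ n * sin (k * π / (n + 1)) ^ 2 * D = (n + 1) * (-1) ^ (k + 1) :=
    prod_cos_sub_cos_erase hk1 hk2
  have hD : D ≠ 0 := by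
    intro h0
    rw [h0, mul_zero] at hden
    exact mul_ne_zero (by positivity) (pow_ne_zero _ (by norm_num)) hden.symm
  have hpow : (2 : ℝ) * 2 ^ (n - 1) = 2 ^ n := mul_pow_sub_one (by omega) 2
  rw [eq_div_iff hD, div_mul_eq_mul_div, div_mul_eq_mul_div, div_eq_iff (by positivity)]
  apply mul_left_cancel₀ (pow_ne_zero (n - 1) (two_ne_zero : (2 : ℝ) ≠ 0))
  linear_combination hden - (n + 1) * hnum + sin (k * π / (n + 1)) ^ 2 * D * hpow

theorem stmt13 (n k : ℕ) (hn : 2 ≤ n) (hk1 : 1 ≤ k) (hk2 : k ≤ n) :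
    (2 / (n + 1)) * Real.sin (k * π / (n + 1)) ^ 2 =
      (∏ j ∈ Finset.Icc 1 (n - 1), (Real.cos (k * π / (n + 1)) - Real.cos (j * π / n))) /
      (∏ j ∈ (Finset.Icc 1 n).erase k,
        (Real.cos (k * π / (n + 1)) - Real.cos (j * π / (n + 1)))) :=
  stmt13_general n k hk1 hk2
end

section
/- Trigonometric identity: for n ≥ 2, k ∈ {1,…,n}, and l ∈ {2,…,n-1}, (2/(n+1)) sin²(klπ/(n+1)) = [∏_{j=1}^{l-1}(cos(kπ/(n+1)) - cos(jπ/l)) · ∏_{j=l}^{n-1}(cos(kπ/(n+1)) - cos((j-l+1)π/(n-l+1)))] / ∏_{j=1, j≠k}^{n}(cos(kπ/(n+1)) - cos(jπ/(n+1))). -/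
/-!
Everything is computed from the factorisation `U_n = 2^n ∏_{j=1}^n (X - cos (jπ/(n+1)))` of the
Chebyshev polynomial of the second kind, i.e.
`sin ((n+1)θ) = 2^n sin θ ∏_{j=1}^n (cos θ - cos (jπ/(n+1)))`.
With `θ = kπ/(n+1)` the two products in the numerator are `sin (lθ) / (2^(l-1) sin θ)` and
`sin ((n-l+1)θ) / (2^(n-l) sin θ)`, and `sin ((n-l+1)θ) = (-1)^(k+1) sin (lθ)` because
`(n+1)θ = kπ`. The denominator is `U_n'(cos θ) / 2^n`; differentiating
`U_n(cos θ) sin θ = sin ((n+1)θ)` at the root `cos θ` of `U_n` gives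
`U_n'(cos θ) sin² θ = (-1)^(k+1) (n+1)`.
-/

open Real Finset

namespace Polynomial

theorem eval_derivative_prod_X_sub_C_of_mem_s14 {R ι : Type*} [CommRing R] [DecidableEq ι]
    {s : Finset ι} {f : ι → R} {k : ι} (hk : k ∈ s) :
    (derivative (∏ j ∈ s, (X - C (f j)))).eval (f k) = ∏ j ∈ s.erase k, (f k - f j) := by
  rw [derivative_prod_finset, eval_finsetSum, sum_eq_single_of_mem k hk]
  · simp [eval_prod]
  · intro a _ hak
    rw [eval_mul, eval_prod]
    simp only [eval_sub, eval_X, eval_C]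
    rw [prod_eq_zero (mem_erase.mpr ⟨Ne.symm hak, hk⟩) (sub_self _), zero_mul]

namespace Chebyshev

-- `Polynomial.C` is spelled out: inside this namespace `C` also names a Chebyshev family.
theorem U_real_eq_prod_s14 (n : ℕ) :
    U ℝ n = Polynomial.C (2 ^ n) * ∏ j ∈ Icc 1 n, (X - Polynomial.C (cos (j * π / (n + 1)))) := by
  have hinj := (range n).nodup_map_iff_injOn.mp (roots_U_real_nodup n)
  have hroots : Multiset.card (U ℝ n).roots = (U ℝ n).natDegree := by
    rw [roots_U_real, natDegree_U_natCast, Finset.card_val, card_image_of_injOn hinj, card_range]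
  rw [← C_leadingCoeff_mul_prod_multiset_X_sub_C hroots, leadingCoeff_U_natCast, roots_U_real,
    ← Finset.prod_eq_multiset_prod, prod_image hinj, range_eq_Ico, ← Ico_add_one_right_eq_Icc,
    ← prod_Ico_add' (fun j : ℕ => X - Polynomial.C (cos (j * π / (n + 1)))) 0 n 1]
  push_cast
  rfl

theorem U_real_derivative_cos (n : ℤ) (θ : ℝ) :
    (derivative (U ℝ n)).eval (cos θ) * sin θ ^ 2 =
      (U ℝ n).eval (cos θ) * cos θ - (n + 1) * cos ((n + 1) * θ) := by
  have hlhs : HasDerivAt (fun x => (U ℝ n).eval (cos x) * sin x)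
      ((derivative (U ℝ n)).eval (cos θ) * -sin θ * sin θ + (U ℝ n).eval (cos θ) * cos θ) θ :=
    (((U ℝ n).hasDerivAt (cos θ)).comp θ (hasDerivAt_cos θ)).mul (hasDerivAt_sin θ)
  have hrhs : HasDerivAt (fun x => sin ((n + 1) * x)) (cos ((n + 1) * θ) * (n + 1)) θ := by
    simpa using ((hasDerivAt_id θ).const_mul ((n : ℝ) + 1)).sin
  simp only [U_real_cos] at hlhs
  linear_combination hrhs.unique hlhs

end Chebyshev

end Polynomial

theorem Finset.prod_Icc_sub_add_one {M : Type*} [CommMonoid M] (f : ℕ → M) (a b : ℕ) :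
    ∏ j ∈ Icc a b, f (j - a + 1) = ∏ i ∈ Icc 1 (b + 1 - a), f i := by
  refine prod_nbij' (fun j => j - a + 1) (fun i => i + a - 1) ?_ ?_ ?_ ?_ (fun _ _ => rfl) <;>
    intro x hx <;> simp only [mem_Icc] at * <;> omega

open Polynomial
open Polynomial.Chebyshev (U U_real_cos U_real_eq_prod_s14 U_real_derivative_cos)

namespace Real

theorem sin_mul_eq_prod_cos_sub_cos {N : ℕ} (hN : 1 ≤ N) (θ : ℝ) :
    sin (N * θ) = 2 ^ (N - 1) * sin θ * ∏ j ∈ Icc 1 (N - 1), (cos θ - cos (j * π / N)) := by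
  obtain ⟨n, rfl⟩ : ∃ n, N = n + 1 := ⟨N - 1, by omega⟩
  have h := U_real_cos θ n
  rw [U_real_eq_prod_s14, eval_mul, eval_C, eval_prod] at h
  simp only [eval_sub, eval_X, eval_C] at h
  push_cast at h ⊢
  rw [← h]
  ring

theorem sin_nat_sub_mul_pi_div {n k l : ℕ} (hl : l ≤ n + 1) :
    sin ((n + 1 - l : ℕ) * (k * π / (n + 1))) = -((-1) ^ k * sin (l * (k * π / (n + 1)))) := by
  rw [← sin_nat_mul_pi_sub]
  congr 1
  push_cast [Nat.cast_sub hl]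
  field_simp

theorem sin_pi_div_pos {n k : ℕ} (hk : k ∈ Icc 1 n) : 0 < sin (k * π / (n + 1)) := by
  obtain ⟨hk1, hkn⟩ := mem_Icc.mp hk
  apply sin_pos_of_pos_of_lt_pi (by positivity)
  rw [div_lt_iff₀ (by positivity)]
  have : (k : ℝ) < n + 1 := by exact_mod_cast Nat.lt_succ_of_le hkn
  nlinarith [pi_pos]

theorem prod_erase_cos_sub_cos_mul_sin_sq {n k : ℕ} (hk : k ∈ Icc 1 n) :
    2 ^ n * (∏ j ∈ (Icc 1 n).erase k, (cos (k * π / (n + 1)) - cos (j * π / (n + 1)))) *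
      sin (k * π / (n + 1)) ^ 2 = -((-1) ^ k * (n + 1)) := by
  set θ : ℕ → ℝ := fun j => j * π / (n + 1)
  have hroot : (U ℝ n).eval (cos (θ k)) = 0 := by
    rw [U_real_eq_prod_s14, eval_mul, eval_prod, prod_eq_zero hk (by simp [θ]), mul_zero]
  have hderiv : (derivative (U ℝ n)).eval (cos (θ k)) =
      2 ^ n * ∏ j ∈ (Icc 1 n).erase k, (cos (θ k) - cos (θ j)) := by
    rw [U_real_eq_prod_s14, derivative_C_mul, eval_mul, eval_C,
      eval_derivative_prod_X_sub_C_of_mem_s14 (f := fun j => cos (θ j)) hk]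
  have hcos : cos ((n + 1) * θ k) = (-1) ^ k := by
    rw [← cos_nat_mul_pi k]
    congr 1
    simp only [θ]
    field_simp
  have h := U_real_derivative_cos n (θ k)
  push_cast at h
  rw [hroot, hderiv, hcos] at h
  linear_combination h

end Real

theorem stmt14_general (n k l : ℕ) (hk1 : 1 ≤ k) (hk2 : k ≤ n)
    (hl1 : 2 ≤ l) (hl2 : l ≤ n - 1) :
    (2 / (n + 1)) * Real.sin (k * l * π / (n + 1)) ^ 2 =
      ((∏ j ∈ Finset.Icc 1 (l - 1),
          (Real.cos (k * π / (n + 1)) - Real.cos (j * π / l))) *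
       (∏ j ∈ Finset.Icc l (n - 1),
          (Real.cos (k * π / (n + 1)) -
            Real.cos ((j - l + 1 : ℕ) * π / (n - l + 1 : ℕ))))) /
      (∏ j ∈ (Finset.Icc 1 n).erase k,
        (Real.cos (k * π / (n + 1)) - Real.cos (j * π / (n + 1)))) := by
  have hk : k ∈ Icc 1 n := mem_Icc.mpr ⟨hk1, hk2⟩
  have hsym := sin_nat_sub_mul_pi_div (k := k) (show l ≤ n + 1 by omega)
  set t : ℝ := k * π / (n + 1)
  set D := ∏ j ∈ (Icc 1 n).erase k, (cos t - cos (j * π / (n + 1)))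
  set P₁ := ∏ j ∈ Icc 1 (l - 1), (cos t - cos (j * π / l))
  set P₂ := ∏ j ∈ Icc 1 (n - l), (cos t - cos (j * π / (n - l + 1 : ℕ)))
  have hD : 2 ^ n * D * sin t ^ 2 = -((-1) ^ k * (n + 1)) := prod_erase_cos_sub_cos_mul_sin_sq hk
  have hD0 : D ≠ 0 := by
    rintro h
    rw [h, mul_zero, zero_mul, eq_comm, neg_eq_zero] at hD
    exact mul_ne_zero (pow_ne_zero k (by norm_num)) (by positivity) hD
  have h₁ : sin (l * t) = 2 ^ (l - 1) * sin t * P₁ := sin_mul_eq_prod_cos_sub_cos (by omega) t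
  have h₂ : -((-1) ^ k * sin (l * t)) = 2 ^ (n - l) * sin t * P₂ := by
    rw [← hsym, show n + 1 - l = n - l + 1 by omega]
    exact sin_mul_eq_prod_cos_sub_cos (N := n - l + 1) (by omega) t
  have hpow : (2 : ℝ) ^ n = 2 * 2 ^ (l - 1) * 2 ^ (n - l) := by
    rw [← pow_succ', ← pow_add]; congr 1; omega
  rw [prod_Icc_sub_add_one (fun i : ℕ => cos t - cos (i * π / (n - l + 1 : ℕ))) l (n - 1),
    show n - 1 + 1 - l = n - l by omega, show (k : ℝ) * l * π / (n + 1) = l * t by ring,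
    eq_div_iff hD0, div_mul_eq_mul_div, div_mul_eq_mul_div, div_eq_iff (by positivity)]
  refine mul_left_cancel₀ (mul_ne_zero (pow_ne_zero n two_ne_zero)
    (pow_ne_zero 2 (sin_pi_div_pos hk).ne')) ?_
  linear_combination 2 * sin (l * t) ^ 2 * hD - (n + 1) * sin t ^ 2 * P₁ * P₂ * hpow +
    2 * (n + 1) * (sin (l * t) * h₂ + 2 ^ (n - l) * sin t * P₂ * h₁)

theorem stmt14 (n k l : ℕ) (hn : 2 ≤ n) (hk1 : 1 ≤ k) (hk2 : k ≤ n)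
    (hl1 : 2 ≤ l) (hl2 : l ≤ n - 1) :
    (2 / (n + 1)) * Real.sin (k * l * π / (n + 1)) ^ 2 =
      ((∏ j ∈ Finset.Icc 1 (l - 1),
          (Real.cos (k * π / (n + 1)) - Real.cos (j * π / l))) *
       (∏ j ∈ Finset.Icc l (n - 1),
          (Real.cos (k * π / (n + 1)) -
            Real.cos ((j - l + 1 : ℕ) * π / (n - l + 1 : ℕ))))) /
      (∏ j ∈ (Finset.Icc 1 n).erase k,
        (Real.cos (k * π / (n + 1)) - Real.cos (j * π / (n + 1)))) :=
  stmt14_general n k l hk1 hk2 hl1 hl2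
end

section
/- The quadratic FEM generalized eigenvalue problem with stiffness matrix K and mass matrix M of dimension (2n-1)×(2n-1) (defined below with h = 1/n) has the eigenvalue λ = 10n², with eigenvector u given by u_{2j+1} = (-1)^j for j = 0,…,n-1 and u_{2j} = 0 for j = 1,…,n-1. -/
open Matrix

lemma mulVec_pattern (n : ℕ) (c d0 d1 o t : ℝ)
    (A : Matrix (Fin (2 * n - 1)) (Fin (2 * n - 1)) ℝ)
    (hA : ∀ i j : Fin (2 * n - 1), A i j = c *
      (if i = j then (if i.1 % 2 = 0 then d0 else d1)
       else if i.1 + 1 = j.1 ∨ j.1 + 1 = i.1 then o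
       else if i.1 % 2 = 1 ∧ j.1 % 2 = 1 ∧ (i.1 + 2 = j.1 ∨ j.1 + 2 = i.1) then t
       else 0))
    (u : Fin (2 * n - 1) → ℝ)
    (hu : ∀ i : Fin (2 * n - 1), u i = if i.1 % 2 = 0 then (-1 : ℝ) ^ (i.1 / 2) else 0)
    (i : Fin (2 * n - 1)) :
    A.mulVec u i = if i.1 % 2 = 0 then c * d0 * (-1 : ℝ) ^ (i.1 / 2) else 0 := by
  rw [mulVec, dotProduct]
  by_cases hpar : i.1 % 2 = 0
  · rw [if_pos hpar]
    rw [Finset.sum_eq_single i]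
    · rw [hA, hu, if_pos rfl, if_pos hpar, if_pos hpar]
    · intro j _ hj
      by_cases hjp : j.1 % 2 = 0
      · rw [hA]
        rw [if_neg (fun h => hj (h.symm))]
        rw [if_neg (by omega), if_neg (by omega)]
        ring
      · rw [hu, if_neg hjp]; ring
    · intro h; exact absurd (Finset.mem_univ i) h
  · rw [if_neg hpar]
    have hpar1 : i.1 % 2 = 1 := by omega
    have hlt : i.1 + 1 < 2 * n - 1 := by omega
    have hge : 1 ≤ i.1 := by omega
    set a : Fin (2 * n - 1) := ⟨i.1 - 1, by omega⟩ with ha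
    set b : Fin (2 * n - 1) := ⟨i.1 + 1, by omega⟩ with hb
    have hab : a ≠ b :=
      Fin.ne_of_val_ne (by simp only [ha, hb, Fin.val_mk]; omega)
    have hz : ∀ j ∈ Finset.univ, j ∉ ({a, b} : Finset (Fin (2 * n - 1))) →
        A i j * u j = 0 := by
      intro j _ hj
      simp only [Finset.mem_insert, Finset.mem_singleton] at hj
      push_neg at hj
      obtain ⟨hja, hjb⟩ := hj
      by_cases hjp : j.1 % 2 = 0
      · have hja' : j.1 ≠ i.1 - 1 := by
          intro h; exact hja (Fin.ext (by simp only [ha, Fin.val_mk]; omega))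
        have hjb' : j.1 ≠ i.1 + 1 := by
          intro h; exact hjb (Fin.ext (by simp only [hb, Fin.val_mk]; omega))
        rw [hA]
        rw [if_neg (by intro h; rw [h] at hpar1; omega),
            if_neg (by omega), if_neg (by omega)]
        ring
      · rw [hu, if_neg hjp]; ring
    rw [← Finset.sum_subset (Finset.subset_univ {a, b}) hz, Finset.sum_pair hab]
    have hia : i ≠ a := by
      intro h
      have : i.1 = a.1 := by rw [h]
      simp only [ha, Fin.val_mk] at this; omega
    have hib : i ≠ b := by
      intro h
      have : i.1 = b.1 := by rw [h]
      simp only [hb, Fin.val_mk] at this; omega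
    have hAa : A i a = c * o := by
      rw [hA, if_neg hia, if_pos (Or.inr (by simp only [ha, Fin.val_mk]; omega))]
    have hAb : A i b = c * o := by
      rw [hA, if_neg hib, if_pos (Or.inl (by simp only [hb, Fin.val_mk]))]
    have hua : u a = (-1 : ℝ) ^ ((i.1 - 1) / 2) := by
      rw [hu, if_pos (by simp only [ha, Fin.val_mk]; omega)]
    have hub : u b = (-1 : ℝ) ^ ((i.1 - 1) / 2 + 1) := by
      rw [hu, if_pos (by simp only [hb, Fin.val_mk]; omega)]
      simp only [hb, Fin.val_mk]
      congr 1
      omega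
    rw [hAa, hAb, hua, hub, pow_succ]
    ring

theorem stmt18 (n : ℕ) (hn : 2 ≤ n)
    (K M : Matrix (Fin (2 * n - 1)) (Fin (2 * n - 1)) ℝ)
    (hK : ∀ i j : Fin (2 * n - 1), K i j = (n : ℝ) *
      (if i = j then (if i.1 % 2 = 0 then 16 / 3 else 14 / 3)
       else if i.1 + 1 = j.1 ∨ j.1 + 1 = i.1 then -8 / 3
       else if i.1 % 2 = 1 ∧ j.1 % 2 = 1 ∧ (i.1 + 2 = j.1 ∨ j.1 + 2 = i.1) then 1 / 3
       else 0))
    (hM : ∀ i j : Fin (2 * n - 1), M i j = (1 / (n : ℝ)) *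
      (if i = j then (if i.1 % 2 = 0 then 8 / 15 else 4 / 15)
       else if i.1 + 1 = j.1 ∨ j.1 + 1 = i.1 then 1 / 15
       else if i.1 % 2 = 1 ∧ j.1 % 2 = 1 ∧ (i.1 + 2 = j.1 ∨ j.1 + 2 = i.1) then -1 / 30
       else 0)) :
    let u : Fin (2 * n - 1) → ℝ := fun i => if i.1 % 2 = 0 then (-1 : ℝ) ^ (i.1 / 2) else 0
    u ≠ 0 ∧ K.mulVec u = ((10 : ℝ) * n ^ 2) • M.mulVec u := by
  intro u
  have hu : ∀ i : Fin (2 * n - 1), u i = if i.1 % 2 = 0 then (-1 : ℝ) ^ (i.1 / 2) else 0 :=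
    fun i => rfl
  have hn0 : (n : ℝ) ≠ 0 := by positivity
  constructor
  · intro h
    have h0 : (0 : ℕ) < 2 * n - 1 := by omega
    have := congrFun h ⟨0, h0⟩
    simp [hu] at this
  · funext i
    rw [mulVec_pattern n (n : ℝ) (16/3) (14/3) (-8/3) (1/3) K hK u hu i]
    rw [Pi.smul_apply, smul_eq_mul,
      mulVec_pattern n (1/(n : ℝ)) (8/15) (4/15) (1/15) (-1/30) M hM u hu i]
    by_cases hpar : i.1 % 2 = 0
    · simp only [if_pos hpar]
      field_simp
      ring
    · simp only [if_neg hpar, mul_zero]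
end
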